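/- Let w be a C'-adic word with directive sequence (τ_n), let w^{(1)} be its shifted word, let u be a nonempty bispecial factor of w and let v be the bispecial antecedent of u under τ_0. If v is an ordinary bispecial factor of w^{(1)}, then u is an ordinary bispecial factor of w. -/
import Mathlib


/-- Letters `0, 1, 2` stand for the letters `1, 2, 3` of the paper. -/
abbrev Letter := Fin 3

/-- A finite word over the alphabet `{1,2,3}`. -/
abbrev Word := List Letter

/-- Apply a substitution (given by its values on letters) to a finite word. -/
def applySub (σ : Letter → Word) (w : Word) : Word := (w.map σ).flatten

/-- `c11 = c₁² : 1 ↦ 1, 2 ↦ 12, 3 ↦ 13`. -/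
def c11 : Letter → Word := ![[0], [0, 1], [0, 2]]

/-- `c22 = c₂² : 1 ↦ 13, 2 ↦ 23, 3 ↦ 3`. -/
def c22 : Letter → Word := ![[0, 2], [1, 2], [2]]

/-- `c122 = c₁c₂² : 1 ↦ 12, 2 ↦ 132, 3 ↦ 2`. -/
def c122 : Letter → Word := ![[0, 1], [0, 2, 1], [1]]

/-- `c211 = c₂c₁² : 1 ↦ 2, 2 ↦ 213, 3 ↦ 23`. -/
def c211 : Letter → Word := ![[1], [1, 0, 2], [1, 2]]

/-- `c121 = c₁c₂c₁ : 1 ↦ 13, 2 ↦ 132, 3 ↦ 12`. -/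
def c121 : Letter → Word := ![[0, 2], [0, 2, 1], [0, 1]]

/-- `c212 = c₂c₁c₂ : 1 ↦ 23, 2 ↦ 213, 3 ↦ 13`. -/
def c212 : Letter → Word := ![[1, 2], [1, 0, 2], [0, 2]]

/-- The set of substitutions `C'`. -/
def Cprime : Set (Letter → Word) := {c11, c22, c122, c211, c121, c212}

/-- `comps τ r k` is the composition `τ_r ∘ τ_{r+1} ∘ ⋯ ∘ τ_{r+k-1}` acting on words. -/
def comps (τ : ℕ → Letter → Word) : ℕ → ℕ → Word → Word
  | _, 0 => id
  | r, k + 1 => applySub (τ r) ∘ comps τ (r + 1) k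

/-- `u` is a prefix of the infinite word `w`. -/
def IsPrefixOfInf (u : Word) (w : ℕ → Letter) : Prop :=
  ∀ (k : ℕ) (hk : k < u.length), u[k] = w k

/-- `u` is a factor of the infinite word `w`. -/
def FactorOf (u : Word) (w : ℕ → Letter) : Prop :=
  ∃ i : ℕ, u = List.ofFn (fun j : Fin u.length => w (i + j))

/-- The extension set `E(u,w) = {(a,b) : a·u·b is a factor of w}`. -/
def ExtSet (u : Word) (w : ℕ → Letter) : Set (Letter × Letter) :=
  {p | FactorOf ([p.1] ++ u ++ [p.2]) w}

/-- A factor `u` of `w` is bispecial if both projections of `E(u,w)` have at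
least two elements. -/
def Bispecial (u : Word) (w : ℕ → Letter) : Prop :=
  1 < (Prod.fst '' ExtSet u w).ncard ∧ 1 < (Prod.snd '' ExtSet u w).ncard

/-- The possible synchronization decompositions of `u` from `v` under `σ = τ₀`,
following the synchronization lemma. -/
def SyncDecomp (σ : Letter → Word) (u v : Word) : Prop :=
  (σ = c11 → u = applySub σ v ++ [0]) ∧
  (σ = c22 → u = [2] ++ applySub σ v) ∧
  (σ = c122 → u = [1] ++ applySub σ v ∨ u = [1] ++ applySub σ v ++ [0]) ∧
  (σ = c211 → u = applySub σ v ++ [1] ∨ u = [2] ++ applySub σ v ++ [1]) ∧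
  (σ = c121 → ∃ p ∈ ([[], [1]] : List Word), ∃ s ∈ ([[0], [0, 2]] : List Word),
    u = p ++ applySub σ v ++ s) ∧
  (σ = c212 → ∃ p ∈ ([[2], [0, 2]] : List Word), ∃ s ∈ ([[], [1]] : List Word),
    u = p ++ applySub σ v ++ s)

/-- A bispecial factor `u` of `w` is ordinary if there is `(a,b) ∈ E(u,w)` with
`E(u,w) ⊆ ({a} × A) ∪ (A × {b})`. -/
def Ordinary (u : Word) (w : ℕ → Letter) : Prop :=
  ∃ p ∈ ExtSet u w, ∀ q ∈ ExtSet u w, q.1 = p.1 ∨ q.2 = p.2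


namespace Aux


lemma applySub_nil (σ : Letter → Word) : applySub σ [] = [] := rfl

lemma applySub_cons (σ : Letter → Word) (c : Letter) (t : Word) :
    applySub σ (c :: t) = σ c ++ applySub σ t := by
  simp [applySub]

lemma applySub_append (σ : Letter → Word) (s t : Word) :
    applySub σ (s ++ t) = applySub σ s ++ applySub σ t := by
  simp [applySub]

lemma applySub_eq_nil {σ : Letter → Word} (hne : ∀ c, σ c ≠ []) {t : Word}
    (h : applySub σ t = []) : t = [] := by
  cases t with
  | nil => rfl
  | cons c t =>
    rw [applySub_cons] at h
    exact absurd (List.append_eq_nil_iff.mp h).1 (hne c)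

def StartMarked (σ : Letter → Word) (m : Letter) : Prop :=
  ∀ c, ∃ z, σ c = m :: z ∧ m ∉ z

def EndMarked (σ : Letter → Word) (m : Letter) : Prop :=
  ∀ c, ∃ z, σ c = z ++ [m] ∧ m ∉ z

lemma StartMarked.ne_nil {σ : Letter → Word} {m : Letter} (h : StartMarked σ m) :
    ∀ c, σ c ≠ [] := by
  intro c hc
  obtain ⟨z, hz, -⟩ := h c
  simp [hc] at hz

lemma EndMarked.ne_nil {σ : Letter → Word} {m : Letter} (h : EndMarked σ m) :
    ∀ c, σ c ≠ [] := by
  intro c hc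
  obtain ⟨z, hz, -⟩ := h c
  simp [hc] at hz

lemma S1 {σ : Letter → Word} {m : Letter} (hS : StartMarked σ m) :
    ∀ (t p s : Word), applySub σ t = p ++ m :: s →
      ∃ t1 t2, t = t1 ++ t2 ∧ applySub σ t1 = p ∧ applySub σ t2 = m :: s := by
  intro t
  induction t with
  | nil => intro p s h; simp [applySub] at h
  | cons c t ih =>
    intro p s h
    obtain ⟨z, hz, hmz⟩ := hS c
    rw [applySub_cons, hz] at h
    rcases p with _ | ⟨q, p'⟩
    · exact ⟨[], c :: t, by simp, rfl, by rw [applySub_cons, hz]; simpa using h⟩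
    · rw [List.cons_append] at h
      have hq : m = q := by exact (List.cons_eq_cons.mp h).1
      have h2 : z ++ applySub σ t = p' ++ m :: s := (List.cons_eq_cons.mp h).2
      rcases List.append_eq_append_iff.mp h2 with ⟨a', ha1, ha2⟩ | ⟨c', hc1, hc2⟩
      · obtain ⟨t1, t2, rfl, h3, h4⟩ := ih a' s ha2
        exact ⟨c :: t1, t2, by simp, by rw [applySub_cons, hz, ha1, hq]; simp [h3], h4⟩
      · rcases c' with _ | ⟨x, c''⟩
        · simp only [List.append_nil] at hc1
          refine ⟨[c], t, rfl, ?_, by simpa using hc2.symm⟩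
          rw [applySub_cons, applySub_nil, List.append_nil, hz, hq, hc1]
        · exfalso
          have hmx : m = x := (List.cons_eq_cons.mp (by simpa using hc2)).1
          exact hmz (by rw [hc1, hmx]; simp)

lemma S2 {σ : Letter → Word} {m : Letter} (hS : StartMarked σ m)
    (hinj : ∀ c c', σ c = σ c' → c = c') :
    ∀ (v t s : Word), applySub σ v ++ m :: s = applySub σ t →
      ∃ t2, t = v ++ t2 ∧ applySub σ t2 = m :: s := by
  intro v
  induction v with
  | nil => intro t s h; exact ⟨t, by simp, h.symm⟩
  | cons c v ih =>
    intro t s h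
    rcases t with _ | ⟨c2, t'⟩
    · exfalso
      rw [applySub_cons] at h
      obtain ⟨z, hz, -⟩ := hS c
      simp [applySub_nil, hz] at h
    · rw [applySub_cons, applySub_cons, List.append_assoc] at h
      -- h : σ c ++ (applySub σ v ++ m :: s) = σ c2 ++ applySub σ t'
      have hcc : σ c = σ c2 := by
        rcases List.append_eq_append_iff.mp h with ⟨a', ha1, ha2⟩ | ⟨c', hc1, hc2⟩
        · -- σ c2 = σ c ++ a', applySub σ v ++ m :: s = a' ++ applySub σ t'
          rcases a' with _ | ⟨x, a''⟩
          · rw [ha1]; simp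
          · exfalso
            obtain ⟨z2, hz2, hmz2⟩ := hS c2
            have hx : x = m := by
              -- x is the head of (a' ++ applySub σ t')'s... x is at position |σ c| in σ c2
              -- also applySub σ v ++ m :: s = (x :: a'') ++ applySub σ t' : head = x
              rcases v with _ | ⟨c3, v'⟩
              · have : m :: s = x :: (a'' ++ applySub σ t') := by simpa [applySub_nil] using ha2
                exact (List.cons_eq_cons.mp this).1.symm
              · obtain ⟨z3, hz3, -⟩ := hS c3
                rw [applySub_cons, hz3] at ha2
                simpa using (List.cons_eq_cons.mp (by simpa using ha2)).1.symm
            apply hmz2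
            obtain ⟨z1, hz1, -⟩ := hS c
            rw [hz1, hx] at ha1
            rw [hz2] at ha1
            have : z2 = z1 ++ m :: a'' := by simpa using ha1
            rw [this]; simp
        ·
          -- hc1 : σ c = σ c2 ++ c', hc2 : applySub σ t' = c' ++ (applySub σ v ++ m :: s)
          rcases c' with _ | ⟨x, c''⟩
          · rw [hc1]; simp
          · exfalso
            obtain ⟨z1, hz1, hmz1⟩ := hS c
            have hx : x = m := by
              rcases t' with _ | ⟨c3, t''⟩
              · simp [applySub_nil] at hc2
              · obtain ⟨z3, hz3, -⟩ := hS c3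
                rw [applySub_cons, hz3] at hc2
                exact ((List.cons_eq_cons.mp (by simpa using hc2)).1).symm
            apply hmz1
            obtain ⟨z2, hz2, -⟩ := hS c2
            rw [hz1, hz2, hx] at hc1
            have : z1 = z2 ++ m :: c'' := by simpa using hc1
            rw [this]; simp
      have hc : c = c2 := hinj _ _ hcc
      subst hc
      rw [hcc] at h
      have h' := List.append_cancel_left h
      obtain ⟨t2, rfl, h2⟩ := ih t' s h'
      exact ⟨t2, by simp, h2⟩

lemma E1 {σ : Letter → Word} {m : Letter} (hE : EndMarked σ m) :
    ∀ (t p s : Word), applySub σ t = p ++ m :: s →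
      ∃ t1 t2, t = t1 ++ t2 ∧ applySub σ t1 = p ++ [m] ∧ applySub σ t2 = s := by
  intro t
  induction t with
  | nil => intro p s h; simp [applySub] at h
  | cons c t ih =>
    intro p s h
    obtain ⟨z, hz, hmz⟩ := hE c
    rw [applySub_cons, hz] at h
    -- h : (z ++ [m]) ++ applySub σ t = p ++ m :: s
    rw [List.append_assoc] at h
    -- z ++ (m :: applySub σ t) = p ++ (m :: s)
    rcases List.append_eq_append_iff.mp h with ⟨a', ha1, ha2⟩ | ⟨c', hc1, hc2⟩
    · -- ha1 : p = z ++ a', ha2 : [m] ++ applySub σ t = a' ++ m :: s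
      rcases a' with _ | ⟨x, a''⟩
      · refine ⟨[c], t, rfl, ?_, by simpa using ha2⟩
        rw [applySub_cons, applySub_nil, List.append_nil, hz, ha1]; simp
      · have hmx : m = x := (List.cons_eq_cons.mp (by simpa using ha2)).1
        have h2 : applySub σ t = a'' ++ m :: s := (List.cons_eq_cons.mp (by simpa using ha2)).2
        obtain ⟨t1, t2, rfl, h3, h4⟩ := ih a'' s h2
        refine ⟨c :: t1, t2, by simp, ?_, h4⟩
        rw [applySub_cons, hz, h3, ha1, ← hmx]; simp
    · -- hc1 : z = p ++ c', hc2 : m :: s = c' ++ ([m] ++ applySub σ t)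
      rcases c' with _ | ⟨x, c''⟩
      · simp only [List.append_nil] at hc1
        have h2 : s = applySub σ t := by simpa using hc2
        refine ⟨[c], t, rfl, ?_, h2.symm⟩
        rw [applySub_cons, applySub_nil, List.append_nil, hz, hc1]
      · exfalso
        have hmx : m = x := (List.cons_eq_cons.mp (by simpa using hc2)).1
        exact hmz (by rw [hc1, hmx]; simp)

lemma E2 {σ : Letter → Word} {m : Letter} (hE : EndMarked σ m)
    (hinj : ∀ c c', σ c = σ c' → c = c') :
    ∀ (v t r : Word), applySub σ t = applySub σ v ++ r →
      ∃ t2, t = v ++ t2 ∧ applySub σ t2 = r := by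
  intro v
  induction v with
  | nil => intro t r h; exact ⟨t, by simp, by simpa [applySub_nil] using h⟩
  | cons c v ih =>
    intro t r h
    rcases t with _ | ⟨c2, t'⟩
    · exfalso
      obtain ⟨z, hz, -⟩ := hE c
      rw [applySub_cons, hz] at h
      simp [applySub_nil] at h
    · rw [applySub_cons, applySub_cons, List.append_assoc] at h
      have hcc : σ c2 = σ c := by
        rcases List.append_eq_append_iff.mp h.symm with ⟨a', ha1, ha2⟩ | ⟨c', hc1, hc2⟩
        · -- ha1 : σ c2 = σ c ++ a'
          rcases a' with _ | ⟨x, a''⟩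
          · rw [ha1]; simp
          · exfalso
            obtain ⟨z2, hz2, hmz2⟩ := hE c2
            obtain ⟨z1, hz1, -⟩ := hE c
            rw [hz1, hz2] at ha1
            -- z2 ++ [m] = (z1 ++ [m]) ++ x :: a''
            rcases List.eq_nil_or_concat (x :: a'') with h0 | ⟨L, b, hL⟩
            · simp at h0
            · rw [hL] at ha1
              have : z2 ++ [m] = (z1 ++ [m] ++ L) ++ [b] := by rw [ha1]; simp [List.concat_eq_append]
              obtain ⟨h5, h6⟩ := List.append_inj' this rfl
              apply hmz2
              rw [h5]; simp
        · -- hc1 : σ c = σ c2 ++ c'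
          rcases c' with _ | ⟨x, c''⟩
          · rw [hc1]; simp
          · exfalso
            obtain ⟨z2, hz2, -⟩ := hE c2
            obtain ⟨z1, hz1, hmz1⟩ := hE c
            rw [hz1, hz2] at hc1
            rcases List.eq_nil_or_concat (x :: c'') with h0 | ⟨L, b, hL⟩
            · simp at h0
            · rw [hL] at hc1
              have : z1 ++ [m] = (z2 ++ [m] ++ L) ++ [b] := by rw [hc1]; simp [List.concat_eq_append]
              obtain ⟨h5, h6⟩ := List.append_inj' this rfl
              apply hmz1
              rw [h5]; simp
      have hc : c2 = c := hinj _ _ hcc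
      subst hc
      rw [hcc] at h
      have h' := List.append_cancel_left h
      obtain ⟨t2, rfl, h2⟩ := ih t' r h'
      exact ⟨t2, by simp, h2⟩

lemma SM_core {σ : Letter → Word} {m : Letter} (hS : StartMarked σ m)
    (hinj : ∀ c c', σ c = σ c' → c = c') {t p v s : Word}
    (h : applySub σ t = p ++ (applySub σ v ++ m :: s)) :
    ∃ t1 t3, t = t1 ++ v ++ t3 ∧ applySub σ t1 = p ∧ applySub σ t3 = m :: s := by
  have hhead : ∃ r, applySub σ v ++ m :: s = m :: r := by
    rcases v with _ | ⟨c, v'⟩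
    · exact ⟨s, by simp [applySub_nil]⟩
    · obtain ⟨z, hz, -⟩ := hS c
      exact ⟨z ++ (applySub σ v' ++ m :: s), by rw [applySub_cons, hz]; simp⟩
  obtain ⟨r, hr⟩ := hhead
  rw [hr] at h
  obtain ⟨t1, t2, rfl, h1, h2⟩ := S1 hS t p r h
  rw [← hr] at h2
  obtain ⟨t3, rfl, h3⟩ := S2 hS hinj v t2 s h2.symm
  exact ⟨t1, t3, by simp, h1, h3⟩

lemma EM_core {σ : Letter → Word} {m : Letter} (hE : EndMarked σ m)
    (hinj : ∀ c c', σ c = σ c' → c = c') {t p v s : Word}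
    (h : applySub σ t = p ++ m :: (applySub σ v ++ s)) :
    ∃ t1 t3, t = t1 ++ v ++ t3 ∧ applySub σ t1 = p ++ [m] ∧ applySub σ t3 = s := by
  obtain ⟨t1, t2, rfl, h1, h2⟩ := E1 hE t p _ h
  obtain ⟨t3, rfl, h3⟩ := E2 hE hinj v t2 s h2
  exact ⟨t1, t3, by simp, h1, h3⟩

/-- Left decode: the last letter of `applySub σ t1` is the last letter of the
image of the last letter of `t1`. -/
lemma LD {σ : Letter → Word} (hne : ∀ c, σ c ≠ []) {t1 P : Word} {a : Letter}
    (h : applySub σ t1 = P ++ [a]) :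
    ∃ t1' c z, t1 = t1' ++ [c] ∧ σ c = z ++ [a] ∧ applySub σ t1' ++ z = P := by
  rcases List.eq_nil_or_concat t1 with rfl | ⟨t1', c, rfl⟩
  · simp [applySub_nil] at h
  · simp only [List.concat_eq_append] at h ⊢
    rw [applySub_append, applySub_cons, applySub_nil, List.append_nil] at h
    rcases List.eq_nil_or_concat (σ c) with h0 | ⟨z, x, hz⟩
    · exact absurd h0 (hne c)
    · rw [List.concat_eq_append] at hz
      rw [hz, ← List.append_assoc] at h
      obtain ⟨h1, h2⟩ := List.append_inj' h rfl
      have hx : x = a := by simpa using h2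
      exact ⟨t1', c, z, rfl, by rw [hz, hx], h1⟩

/-- Right decode: expose the first letter of `t3`. -/
lemma RD {σ : Letter → Word} {t3 : Word} {y : Letter} {s : Word}
    (h : applySub σ t3 = y :: s) :
    ∃ d t4, t3 = d :: t4 ∧ σ d ++ applySub σ t4 = y :: s := by
  rcases t3 with _ | ⟨d, t4⟩
  · simp [applySub_nil] at h
  · exact ⟨d, t4, rfl, by rw [← applySub_cons, h]⟩


def chunk (w : ℕ → Letter) (i l : ℕ) : Word := List.ofFn fun k : Fin l => w (i + k)

@[simp] lemma chunk_length (w : ℕ → Letter) (i l : ℕ) : (chunk w i l).length = l := by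
  simp [chunk]

lemma chunk_getElem (w : ℕ → Letter) (i l k : ℕ) (hk : k < l) :
    (chunk w i l)[k]'(by simpa using hk) = w (i + k) := by
  simp [chunk]

lemma chunk_append (w : ℕ → Letter) (i l1 l2 : ℕ) :
    chunk w i (l1 + l2) = chunk w i l1 ++ chunk w (i + l1) l2 := by
  refine List.ext_getElem (by simp) ?_
  intro k h1 h2
  rcases Nat.lt_or_ge k l1 with hk | hk
  · rw [List.getElem_append_left (by simpa using hk)]
    simp [chunk]
  · rw [List.getElem_append_right (by simpa using hk)]
    simp only [chunk, List.getElem_ofFn, List.length_ofFn]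
    congr 1
    omega

lemma eq_chunk_of_prefix {L : Word} {w : ℕ → Letter} (hL : IsPrefixOfInf L w) :
    L = chunk w 0 L.length := by
  refine List.ext_getElem (by simp) ?_
  intro k h1 h2
  rw [chunk_getElem w 0 L.length k (by simpa using h2)]
  simpa using hL k h1

lemma factorOf_iff {x : Word} {w : ℕ → Letter} :
    FactorOf x w ↔ ∃ i, x = chunk w i x.length := Iff.rfl

lemma chunk_isInfix {L : Word} {w : ℕ → Letter} {i l : ℕ} (hL : IsPrefixOfInf L w)
    (h : i + l ≤ L.length) : chunk w i l <:+: L := by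
  refine ⟨chunk w 0 i, chunk w (i + l) (L.length - i - l), ?_⟩
  have hlen : L.length = i + (l + (L.length - i - l)) := by omega
  conv_rhs => rw [eq_chunk_of_prefix hL, hlen]
  rw [chunk_append, chunk_append]
  simp [Nat.zero_add, List.append_assoc]

lemma infix_chunk {L : Word} {w : ℕ → Letter} (hL : IsPrefixOfInf L w) {p x q : Word}
    (h : p ++ x ++ q = L) : x = chunk w p.length x.length := by
  have hlen : L.length = p.length + (x.length + q.length) := by
    rw [← h]; simp
  have hsplit : L = chunk w 0 p.length ++ (chunk w p.length x.length ++
      chunk w (p.length + x.length) q.length) := by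
    conv_lhs => rw [eq_chunk_of_prefix hL, hlen]
    rw [chunk_append, chunk_append]
    simp
  have hc : p ++ (x ++ q) = chunk w 0 p.length ++ (chunk w p.length x.length ++
      chunk w (p.length + x.length) q.length) := by
    rw [← List.append_assoc, h]; exact hsplit
  obtain ⟨-, h2⟩ := List.append_inj hc (by simp)
  exact (List.append_inj h2 (by simp)).1

lemma factorOf_of_infix_chunk {x : Word} {w : ℕ → Letter} {L : Word}
    (hL : IsPrefixOfInf L w) (h : x <:+: L) : FactorOf x w := by
  obtain ⟨p, q, hpq⟩ := h
  exact factorOf_iff.mpr ⟨p.length, infix_chunk hL hpq⟩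

lemma length_le_applySub {σ : Letter → Word} (hne : ∀ c, σ c ≠ []) (t : Word) :
    t.length ≤ (applySub σ t).length := by
  induction t with
  | nil => simp [applySub_nil]
  | cons c t ih =>
    rw [applySub_cons, List.length_append, List.length_cons]
    have : 1 ≤ (σ c).length := by
      rcases List.eq_nil_or_concat (σ c) with h0 | ⟨L, b, hL⟩
      · exact absurd h0 (hne c)
      · rw [hL]; simp
    omega

lemma Cprime_ne_nil {σ : Letter → Word} (hσ : σ ∈ Cprime) : ∀ c, σ c ≠ [] := by
  rcases hσ with rfl | rfl | rfl | rfl | rfl | rfl <;> · intro c; fin_cases c <;> simp [c11, c22, c122, c211, c121, c212]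

lemma comps_succ (τ' : ℕ → Letter → Word) (r k : ℕ) (y : Word) :
    comps τ' r (k + 1) y = applySub (τ' r) (comps τ' (r + 1) k y) := rfl

lemma comps_ne_nil (τ' : ℕ → Letter → Word) (hτ' : ∀ n, τ' n ∈ Cprime) :
    ∀ k r (x : Letter), comps τ' r k [x] ≠ [] := by
  intro k
  induction k with
  | zero => intro r x h; simp [comps] at h
  | succ k ih =>
    intro r x h
    rw [comps_succ] at h
    exact ih (r + 1) x (applySub_eq_nil (Cprime_ne_nil (hτ' r)) h)

lemma comps_head2 (τ' : ℕ → Letter → Word) (hτ' : ∀ n, τ' n ∈ Cprime) :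
    ∀ k r (x : Letter), (comps τ' r k [x]).head? = some 2 → comps τ' r k [x] = [2] := by
  intro k
  induction k with
  | zero =>
    intro r x h
    simp [comps] at h
    simp [comps, h]
  | succ k ih =>
    intro r x h
    rw [comps_succ] at h ⊢
    rcases hY : comps τ' (r + 1) k [x] with _ | ⟨y0, Y'⟩
    · exact absurd hY (comps_ne_nil τ' hτ' k (r+1) x)
    · rw [hY, applySub_cons] at h
      rcases hτ' r with h6 | h6 | h6 | h6 | h6 | h6 <;>
        rw [h6] at h ⊢ <;> fin_cases y0 <;>
        simp [c11, c22, c122, c211, c121, c212] at h ⊢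
      -- remaining: c22 y0 = 2 case
      · have : comps τ' (r+1) k [x] = [2] := ih (r+1) x (by rw [hY]; rfl)
        rw [hY] at this
        obtain ⟨rfl⟩ : Y' = [] := by simpa using this
        simp [applySub_cons, applySub_nil, c22]

lemma transfer {w w1 : ℕ → Letter} {u v : Word}
    (Rl Rr : Letter → Letter → Prop)
    (hPU : ∀ p ∈ ExtSet u w, ∃ c d, (c, d) ∈ ExtSet v w1 ∧ Rl c p.1 ∧ Rr d p.2)
    (hLU : ∀ c d a b, (c, d) ∈ ExtSet v w1 → Rl c a → Rr d b → (a, b) ∈ ExtSet u w)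
    (hl : ∀ c a a', Rl c a → Rl c a' → a = a')
    (hr : ∀ d b b', Rr d b → Rr d b' → b = b')
    (hubis : Bispecial u w) (hord : Ordinary v w1) : Ordinary u w := by
  classical
  obtain ⟨p0, hp0, hdom⟩ := hord
  by_cases hA : ∃ a, Rl p0.1 a
  · by_cases hB : ∃ b, Rr p0.2 b
    · obtain ⟨a, ha⟩ := hA
      obtain ⟨b, hb⟩ := hB
      refine ⟨(a, b), hLU p0.1 p0.2 a b (by simpa using hp0) ha hb, ?_⟩
      intro q hq
      obtain ⟨c, d, hcd, h1, h2⟩ := hPU q hq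
      rcases hdom (c, d) hcd with hc | hc
      · exact Or.inl (hl p0.1 q.1 a (hc ▸ h1) ha)
      · exact Or.inr (hr p0.2 q.2 b (hc ▸ h2) hb)
    · exfalso
      obtain ⟨b1, b2, hb1, hb2, hne⟩ :=
        (Set.one_lt_ncard_iff (Set.toFinite _)).mp hubis.1
      obtain ⟨q1, hq1, rfl⟩ := hb1
      obtain ⟨q2, hq2, rfl⟩ := hb2
      obtain ⟨c1, d1, hcd1, hl1, hr1⟩ := hPU q1 hq1
      obtain ⟨c2, d2, hcd2, hl2, hr2⟩ := hPU q2 hq2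
      have hd1 : ¬ ((c1, d1).2 = p0.2) := fun h => hB ⟨q1.2, h ▸ hr1⟩
      have hd2 : ¬ ((c2, d2).2 = p0.2) := fun h => hB ⟨q2.2, h ▸ hr2⟩
      have hc1 : c1 = p0.1 := (hdom (c1, d1) hcd1).resolve_right hd1
      have hc2 : c2 = p0.1 := (hdom (c2, d2) hcd2).resolve_right hd2
      exact hne (hl p0.1 q1.1 q2.1 (hc1 ▸ hl1) (hc2 ▸ hl2))
  · exfalso
    obtain ⟨b1, b2, hb1, hb2, hne⟩ :=
      (Set.one_lt_ncard_iff (Set.toFinite _)).mp hubis.2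
    obtain ⟨q1, hq1, rfl⟩ := hb1
    obtain ⟨q2, hq2, rfl⟩ := hb2
    obtain ⟨c1, d1, hcd1, hl1, hr1⟩ := hPU q1 hq1
    obtain ⟨c2, d2, hcd2, hl2, hr2⟩ := hPU q2 hq2
    have hd1 : ¬ ((c1, d1).1 = p0.1) := fun h => hA ⟨q1.1, h ▸ hl1⟩
    have hd2 : ¬ ((c2, d2).1 = p0.1) := fun h => hA ⟨q2.1, h ▸ hl2⟩
    have hc1 : d1 = p0.2 := (hdom (c1, d1) hcd1).resolve_left hd1
    have hc2 : d2 = p0.2 := (hdom (c2, d2) hcd2).resolve_left hd2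
    exact hne (hr p0.2 q1.2 q2.2 (hc1 ▸ hr1) (hc2 ▸ hr2))

lemma chunk_zero_prefix (w1 : ℕ → Letter) (n : ℕ) : IsPrefixOfInf (chunk w1 0 n) w1 := by
  intro k hk
  have := chunk_getElem w1 0 n k (by simpa using hk)
  simpa using this

lemma chunk_one (w1 : ℕ → Letter) (i : ℕ) : chunk w1 i 1 = [w1 i] := by
  simp [chunk, List.ofFn_succ]

lemma main_variant {w w1 : ℕ → Letter} {σ : Letter → Word} {u v : Word}
    (Rl Rr : Letter → Letter → Prop)
    (hwpref : ∀ n : ℕ, IsPrefixOfInf (applySub σ (chunk w1 0 n)) w)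
    (hne : ∀ c, σ c ≠ [])
    (hP : ∀ (t : Word) (a b : Letter), ([a] ++ u ++ [b]) <:+: applySub σ t →
      ∃ c d, ([c] ++ v ++ [d]) <:+: t ∧ Rl c a ∧ Rr d b)
    (hL : ∀ (t1 t2 : Word) (c d e a b : Letter), Rl c a → Rr d b → (c = 2 → t1 ≠ []) →
      ([a] ++ u ++ [b]) <:+: applySub σ (t1 ++ ([c] ++ (v ++ ([d, e] ++ t2)))))
    (hl : ∀ c a a', Rl c a → Rl c a' → a = a')
    (hr : ∀ d b b', Rr d b → Rr d b' → b = b')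
    (hw1zero : w1 0 ≠ 2)
    (hubis : Bispecial u w) (hord : Ordinary v w1) : Ordinary u w := by
  refine transfer Rl Rr ?_ ?_ hl hr hubis hord
  · rintro ⟨A, B⟩ hmem
    obtain ⟨i, hx⟩ := factorOf_iff.mp hmem
    have hxlen : ([A] ++ u ++ [B]).length = u.length + 2 := by simp
    rw [hxlen] at hx
    set n := i + (u.length + 2) with hn
    have hlen : n ≤ (applySub σ (chunk w1 0 n)).length := by
      calc n = (chunk w1 0 n).length := by simp
      _ ≤ _ := length_le_applySub hne _
    have hinf : ([A] ++ u ++ [B]) <:+: applySub σ (chunk w1 0 n) := by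
      rw [hx]
      exact chunk_isInfix (hwpref n) (by omega)
    obtain ⟨c, d, hinf2, h1, h2⟩ := hP _ A B hinf
    exact ⟨c, d, factorOf_of_infix_chunk (chunk_zero_prefix w1 n) hinf2, h1, h2⟩
  · intro c d a b hmem hRl hRr
    obtain ⟨i, hx⟩ := factorOf_iff.mp hmem
    have hxlen : ([c] ++ v ++ [d]).length = v.length + 2 := by simp
    rw [hxlen] at hx
    set e := w1 (i + (v.length + 2)) with he
    set n := i + (v.length + 3) with hn
    have hwi : w1 i = c := by
      have h0 := congrArg (fun l : Word => l[0]?) hx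
      simp [chunk] at h0
      simpa using h0.symm
    have hsplit : chunk w1 0 n = chunk w1 0 i ++ ([c] ++ (v ++ ([d, e] ++ ([] : Word)))) := by
      have h1 : chunk w1 0 n = chunk w1 0 i ++ chunk w1 i (v.length + 3) := by
        rw [hn]
        simpa using chunk_append w1 0 i (v.length + 3)
      have h2 : chunk w1 i (v.length + 3) = chunk w1 i (v.length + 2) ++ [e] := by
        rw [show v.length + 3 = (v.length + 2) + 1 by omega, chunk_append, chunk_one, he]
      rw [h1, h2, ← hx]
      simp
    have ht1 : c = 2 → chunk w1 0 i ≠ [] := by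
      intro hc2 h0
      have hi : i = 0 := by simpa using congrArg List.length h0
      rw [hi] at hwi
      exact hw1zero (hwi.trans hc2)
    have hinf := hL (chunk w1 0 i) [] c d e a b hRl hRr ht1
    rw [← hsplit] at hinf
    exact factorOf_of_infix_chunk (hwpref n) hinf

lemma assemble' (A1 B C D E F P1 X1 X2 R2 : Word) (hc : A1 ++ B = P1 ++ X1)
    (hde : D ++ E = X2 ++ R2) :
    A1 ++ (B ++ (C ++ (D ++ (E ++ F)))) = P1 ++ ((X1 ++ (C ++ X2)) ++ (R2 ++ F)) := by
  calc A1 ++ (B ++ (C ++ (D ++ (E ++ F))))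
      = (A1 ++ B) ++ (C ++ ((D ++ E) ++ F)) := by simp [List.append_assoc]
    _ = (P1 ++ X1) ++ (C ++ ((X2 ++ R2) ++ F)) := by rw [hc, hde]
    _ = _ := by simp [List.append_assoc]

lemma expand_applySub (σ : Letter → Word) (t1 t2 v : Word) (c d e : Letter) :
    applySub σ (t1 ++ ([c] ++ (v ++ ([d, e] ++ t2)))) =
      applySub σ t1 ++ (σ c ++ (applySub σ v ++ (σ d ++ (σ e ++ applySub σ t2)))) := by
  simp only [applySub_append, applySub_cons, applySub_nil, List.append_nil, List.append_assoc]

lemma eq_last {l z : Word} {a : Letter} (h : l = z ++ [a]) : l.getLast? = some a := by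
  subst h
  simp

section C11

lemma hS_c11 : StartMarked c11 0 := by
  intro c
  fin_cases c
  · exact ⟨[], by decide, by decide⟩
  · exact ⟨[1], by decide, by decide⟩
  · exact ⟨[2], by decide, by decide⟩

lemma hinj_c11 : ∀ c c' : Letter, c11 c = c11 c' → c = c' := by decide

lemma P_c11 (t v : Word) (a b : Letter)
    (h : ([a] ++ (applySub c11 v ++ [0]) ++ [b]) <:+: applySub c11 t) :
    ∃ c d, ([c] ++ v ++ [d]) <:+: t ∧ a = c ∧ b = d := by
  obtain ⟨P, Q, hPQ⟩ := h
  have heq : applySub c11 t =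
      (P ++ [a]) ++ (applySub c11 v ++ (0 : Letter) :: (b :: Q)) := by
    rw [← hPQ]; simp [List.append_assoc]
  obtain ⟨t1, t3, hteq, h1, h3⟩ := SM_core hS_c11 hinj_c11 heq
  obtain ⟨d, t4, ht3, hd⟩ := RD h3
  obtain ⟨t1', c, z, ht1, hc, -⟩ := LD hS_c11.ne_nil h1
  refine ⟨c, d, ⟨t1', t4, by rw [hteq, ht1, ht3]; simp⟩, ?_, ?_⟩
  · have h5 := eq_last hc
    fin_cases c <;> simp [c11] at h5 <;> simp [h5]
  · rw [ht3, applySub_cons] at h3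
    fin_cases d
    · -- c11 0 = [0]
      have h6 : applySub c11 t4 = b :: Q := by
        have : ((0:Letter) :: applySub c11 t4) = (0 :Letter) :: b :: Q := by
          simpa [c11] using h3
        simpa using this
      obtain ⟨ee, t5, -, he⟩ := RD h6
      obtain ⟨ze, hze, -⟩ := hS_c11 ee
      rw [hze] at he
      have : (0 : Letter) = b := by simpa using (List.cons_eq_cons.mp (by simpa using he)).1
      simp [← this]
    · simp [c11] at h3
      exact h3.1.symm
    · simp [c11] at h3
      exact h3.1.symm

lemma L_c11 (t1 t2 v : Word) (c d e a b : Letter) (hRl : a = c) (hRr : b = d) :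
    ([a] ++ (applySub c11 v ++ [0]) ++ [b]) <:+:
      applySub c11 (t1 ++ ([c] ++ (v ++ ([d, e] ++ t2)))) := by
  subst hRl hRr
  obtain ⟨zc, hzc⟩ : ∃ zc, c11 a = zc ++ [a] := by
    fin_cases a
    · exact ⟨[], by decide⟩
    · exact ⟨[0], by decide⟩
    · exact ⟨[0], by decide⟩
  obtain ⟨r, hr⟩ : ∃ r, c11 b ++ c11 e = ([0, b] : Word) ++ r := by
    fin_cases b
    · obtain ⟨z, hz, -⟩ := hS_c11 e
      exact ⟨z, by rw [hz]; rfl⟩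
    · exact ⟨c11 e, by rfl⟩
    · exact ⟨c11 e, by rfl⟩
  refine ⟨applySub c11 t1 ++ zc, r ++ applySub c11 t2, ?_⟩
  rw [expand_applySub, assemble' (applySub c11 t1) (c11 a) (applySub c11 v) (c11 b)
      (c11 e) (applySub c11 t2) (applySub c11 t1 ++ zc) [a] [0, b] r
      (by rw [hzc]; simp [List.append_assoc]) hr]
  simp [List.append_assoc]

end C11

lemma EM_last {σ : Letter → Word} {m : Letter} (hE : EndMarked σ m) {t : Word}
    (ht : t ≠ []) : ∃ z, applySub σ t = z ++ [m] := by
  rcases List.eq_nil_or_concat t with rfl | ⟨t', c, rfl⟩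
  · exact absurd rfl ht
  · obtain ⟨z, hz, -⟩ := hE c
    refine ⟨applySub σ t' ++ z, ?_⟩
    rw [List.concat_eq_append, applySub_append, applySub_cons, applySub_nil,
      List.append_nil, hz]
    simp [List.append_assoc]

lemma EM_last_letter {σ : Letter → Word} {m : Letter} (hE : EndMarked σ m) {t P : Word}
    {x : Letter} (h : applySub σ t = P ++ [x]) : x = m := by
  obtain ⟨t', c, z, -, hc, -⟩ := LD hE.ne_nil h
  obtain ⟨z2, hz2, -⟩ := hE c
  have := (List.append_inj' (hz2.symm.trans hc) rfl).2
  simpa using this.symm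

section C22

lemma hE_c22 : EndMarked c22 2 := by
  intro c
  fin_cases c
  · exact ⟨[0], by decide, by decide⟩
  · exact ⟨[1], by decide, by decide⟩
  · exact ⟨[], by decide, by decide⟩

lemma hinj_c22 : ∀ c c' : Letter, c22 c = c22 c' → c = c' := by decide

lemma P_c22 (t v : Word) (a b : Letter)
    (h : ([a] ++ ([2] ++ applySub c22 v) ++ [b]) <:+: applySub c22 t) :
    ∃ c d, ([c] ++ v ++ [d]) <:+: t ∧ a = c ∧ b = d := by
  obtain ⟨P, Q, hPQ⟩ := h
  have heq : applySub c22 t =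
      (P ++ [a]) ++ (2 : Letter) :: (applySub c22 v ++ (b :: Q)) := by
    rw [← hPQ]; simp [List.append_assoc]
  obtain ⟨t1, t3, hteq, h1, h3⟩ := EM_core hE_c22 hinj_c22 heq
  obtain ⟨d, t4, ht3, hd⟩ := RD h3
  obtain ⟨t1', c, z, ht1, hc, hz⟩ := LD hE_c22.ne_nil h1
  refine ⟨c, d, ⟨t1', t4, by rw [hteq, ht1, ht3]; simp⟩, ?_, ?_⟩
  · fin_cases c
    · have hzv : z = [0] := by
        have : z ++ [2] = [0] ++ [2] := by simpa [c22] using hc.symm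
        exact (List.append_inj' this rfl).1
      rw [hzv] at hz
      have := (List.append_inj' hz rfl).2
      simpa using this.symm
    · have hzv : z = [1] := by
        have : z ++ [2] = [1] ++ [2] := by simpa [c22] using hc.symm
        exact (List.append_inj' this rfl).1
      rw [hzv] at hz
      have := (List.append_inj' hz rfl).2
      simpa using this.symm
    · have hzv : z = [] := by
        have : z ++ [2] = [] ++ [2] := by simpa [c22] using hc.symm
        exact (List.append_inj' this rfl).1
      rw [hzv, List.append_nil] at hz
      simpa using EM_last_letter hE_c22 hz
  · fin_cases d <;> simp [c22] at hd <;> exact hd.1.symm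

lemma L_c22 (t1 t2 v : Word) (c d e a b : Letter) (hRl : a = c) (hRr : b = d)
    (hc2 : c = 2 → t1 ≠ []) :
    ([a] ++ ([2] ++ applySub c22 v) ++ [b]) <:+:
      applySub c22 (t1 ++ ([c] ++ (v ++ ([d, e] ++ t2)))) := by
  subst hRl hRr
  obtain ⟨P1, hP1⟩ : ∃ P1, applySub c22 t1 ++ c22 a = P1 ++ ([a] ++ [2]) := by
    fin_cases a
    · exact ⟨applySub c22 t1, by simp [c22, Matrix.cons_val_zero]⟩
    · exact ⟨applySub c22 t1, by simp [c22]⟩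
    · obtain ⟨z, hz⟩ := EM_last hE_c22 (hc2 rfl)
      exact ⟨z, by rw [hz]; simp [c22, List.append_assoc]⟩
  obtain ⟨r, hr⟩ : ∃ r, c22 b ++ c22 e = [b] ++ r := by
    fin_cases b
    · exact ⟨[2] ++ c22 e, by simp [c22]⟩
    · exact ⟨[2] ++ c22 e, by simp [c22]⟩
    · exact ⟨c22 e, by simp [c22]⟩
  refine ⟨P1, r ++ applySub c22 t2, ?_⟩
  rw [expand_applySub, assemble' (applySub c22 t1) (c22 a) (applySub c22 v) (c22 b)
      (c22 e) (applySub c22 t2) P1 ([a] ++ [2]) [b] r hP1 hr]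
  simp [List.append_assoc]

end C22

section C122

lemma hE_c122 : EndMarked c122 1 := by
  intro c
  fin_cases c
  · exact ⟨[0], by decide, by decide⟩
  · exact ⟨[0, 2], by decide, by decide⟩
  · exact ⟨[], by decide, by decide⟩

lemma hinj_c122 : ∀ c c' : Letter, c122 c = c122 c' → c = c' := by decide

lemma PL_c122 {t1 P0 : Word} {a : Letter}
    (h1 : applySub c122 t1 = (P0 ++ [a]) ++ [1]) :
    ∃ t1' c, t1 = t1' ++ [c] ∧
      ((c = 0 ∧ a = 0) ∨ (c = 1 ∧ a = 2) ∨ (c = 2 ∧ a = 1)) := by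
  obtain ⟨t1', c, z, ht1, hc, hz⟩ := LD hE_c122.ne_nil h1
  refine ⟨t1', c, ht1, ?_⟩
  fin_cases c
  · have hzv : z = [0] := by
      have : z ++ [1] = [0] ++ [1] := by simpa [c122] using hc.symm
      exact (List.append_inj' this rfl).1
    rw [hzv] at hz
    exact Or.inl ⟨rfl, by simpa using (List.append_inj' hz rfl).2.symm⟩
  · have hzv : z = [0, 2] := by
      have : z ++ [1] = [0, 2] ++ [1] := by simpa [c122] using hc.symm
      exact (List.append_inj' this rfl).1
    rw [hzv] at hz
    have hz2 : (applySub c122 t1' ++ [0]) ++ [2] = P0 ++ [a] := by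
      rw [← hz]; simp [List.append_assoc]
    exact Or.inr (Or.inl ⟨rfl, by simpa using (List.append_inj' hz2 rfl).2.symm⟩)
  · have hzv : z = [] := by
      have : z ++ [1] = [] ++ [1] := by simpa [c122] using hc.symm
      exact (List.append_inj' this rfl).1
    rw [hzv, List.append_nil] at hz
    exact Or.inr (Or.inr ⟨rfl, by simpa using EM_last_letter hE_c122 hz⟩)

lemma P_c122_1 (t v : Word) (a b : Letter)
    (h : ([a] ++ ([1] ++ applySub c122 v) ++ [b]) <:+: applySub c122 t) :
    ∃ c d, ([c] ++ v ++ [d]) <:+: t ∧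
      ((c = 0 ∧ a = 0) ∨ (c = 1 ∧ a = 2) ∨ (c = 2 ∧ a = 1)) ∧
      ((d = 0 ∧ b = 0) ∨ (d = 1 ∧ b = 0) ∨ (d = 2 ∧ b = 1)) := by
  obtain ⟨P, Q, hPQ⟩ := h
  have heq : applySub c122 t =
      (P ++ [a]) ++ (1 : Letter) :: (applySub c122 v ++ (b :: Q)) := by
    rw [← hPQ]; simp [List.append_assoc]
  obtain ⟨t1, t3, hteq, h1, h3⟩ := EM_core hE_c122 hinj_c122 heq
  obtain ⟨d, t4, ht3, hd⟩ := RD h3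
  obtain ⟨t1', c, ht1, hca⟩ := PL_c122 h1
  refine ⟨c, d, ⟨t1', t4, by rw [hteq, ht1, ht3]; simp⟩, hca, ?_⟩
  fin_cases d
  · exact Or.inl ⟨rfl, by simp [c122] at hd; exact hd.1.symm⟩
  · exact Or.inr (Or.inl ⟨rfl, by simp [c122] at hd; exact hd.1.symm⟩)
  · exact Or.inr (Or.inr ⟨rfl, by simp [c122] at hd; exact hd.1.symm⟩)

lemma P_c122_2 (t v : Word) (a b : Letter)
    (h : ([a] ++ ([1] ++ applySub c122 v ++ [0]) ++ [b]) <:+: applySub c122 t) :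
    ∃ c d, ([c] ++ v ++ [d]) <:+: t ∧
      ((c = 0 ∧ a = 0) ∨ (c = 1 ∧ a = 2) ∨ (c = 2 ∧ a = 1)) ∧
      ((d = 0 ∧ b = 1) ∨ (d = 1 ∧ b = 2)) := by
  obtain ⟨P, Q, hPQ⟩ := h
  have heq : applySub c122 t =
      (P ++ [a]) ++ (1 : Letter) :: (applySub c122 v ++ ((0 : Letter) :: b :: Q)) := by
    rw [← hPQ]; simp [List.append_assoc]
  obtain ⟨t1, t3, hteq, h1, h3⟩ := EM_core hE_c122 hinj_c122 heq
  obtain ⟨d, t4, ht3, hd⟩ := RD h3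
  obtain ⟨t1', c, ht1, hca⟩ := PL_c122 h1
  refine ⟨c, d, ⟨t1', t4, by rw [hteq, ht1, ht3]; simp⟩, hca, ?_⟩
  fin_cases d
  · exact Or.inl ⟨rfl, by simp [c122] at hd; exact hd.1.symm⟩
  · exact Or.inr ⟨rfl, by simp [c122] at hd; exact hd.1.symm⟩
  · simp [c122] at hd

lemma L_c122_1 (t1 t2 v : Word) (c d e a b : Letter)
    (hRl : (c = 0 ∧ a = 0) ∨ (c = 1 ∧ a = 2) ∨ (c = 2 ∧ a = 1))
    (hRr : (d = 0 ∧ b = 0) ∨ (d = 1 ∧ b = 0) ∨ (d = 2 ∧ b = 1))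
    (hc2 : c = 2 → t1 ≠ []) :
    ([a] ++ ([1] ++ applySub c122 v) ++ [b]) <:+:
      applySub c122 (t1 ++ ([c] ++ (v ++ ([d, e] ++ t2)))) := by
  obtain ⟨P1, hP1⟩ : ∃ P1, applySub c122 t1 ++ c122 c = P1 ++ ([a] ++ [1]) := by
    rcases hRl with ⟨rfl, rfl⟩ | ⟨rfl, rfl⟩ | ⟨rfl, rfl⟩
    · exact ⟨applySub c122 t1, by simp [c122]⟩
    · exact ⟨applySub c122 t1 ++ [0], by simp [c122, List.append_assoc]⟩
    · obtain ⟨z, hz⟩ := EM_last hE_c122 (hc2 rfl)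
      exact ⟨z, by rw [hz]; simp [c122, List.append_assoc]⟩
  obtain ⟨r, hr⟩ : ∃ r, c122 d ++ c122 e = [b] ++ r := by
    rcases hRr with ⟨rfl, rfl⟩ | ⟨rfl, rfl⟩ | ⟨rfl, rfl⟩
    · exact ⟨[1] ++ c122 e, by simp [c122]⟩
    · exact ⟨[2, 1] ++ c122 e, by simp [c122]⟩
    · exact ⟨c122 e, by simp [c122]⟩
  refine ⟨P1, r ++ applySub c122 t2, ?_⟩
  rw [expand_applySub, assemble' (applySub c122 t1) (c122 c) (applySub c122 v) (c122 d)
      (c122 e) (applySub c122 t2) P1 ([a] ++ [1]) [b] r hP1 hr]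
  simp [List.append_assoc]

lemma L_c122_2 (t1 t2 v : Word) (c d e a b : Letter)
    (hRl : (c = 0 ∧ a = 0) ∨ (c = 1 ∧ a = 2) ∨ (c = 2 ∧ a = 1))
    (hRr : (d = 0 ∧ b = 1) ∨ (d = 1 ∧ b = 2))
    (hc2 : c = 2 → t1 ≠ []) :
    ([a] ++ ([1] ++ applySub c122 v ++ [0]) ++ [b]) <:+:
      applySub c122 (t1 ++ ([c] ++ (v ++ ([d, e] ++ t2)))) := by
  obtain ⟨P1, hP1⟩ : ∃ P1, applySub c122 t1 ++ c122 c = P1 ++ ([a] ++ [1]) := by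
    rcases hRl with ⟨rfl, rfl⟩ | ⟨rfl, rfl⟩ | ⟨rfl, rfl⟩
    · exact ⟨applySub c122 t1, by simp [c122]⟩
    · exact ⟨applySub c122 t1 ++ [0], by simp [c122, List.append_assoc]⟩
    · obtain ⟨z, hz⟩ := EM_last hE_c122 (hc2 rfl)
      exact ⟨z, by rw [hz]; simp [c122, List.append_assoc]⟩
  obtain ⟨r, hr⟩ : ∃ r, c122 d ++ c122 e = ([0] ++ [b]) ++ r := by
    rcases hRr with ⟨rfl, rfl⟩ | ⟨rfl, rfl⟩
    · exact ⟨c122 e, by simp [c122]⟩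
    · exact ⟨[1] ++ c122 e, by simp [c122]⟩
  refine ⟨P1, r ++ applySub c122 t2, ?_⟩
  rw [expand_applySub, assemble' (applySub c122 t1) (c122 c) (applySub c122 v) (c122 d)
      (c122 e) (applySub c122 t2) P1 ([a] ++ [1]) ([0] ++ [b]) r hP1 hr]
  simp [List.append_assoc]

end C122

section C211

lemma hS_c211 : StartMarked c211 1 := by
  intro c
  fin_cases c
  · exact ⟨[], by decide, by decide⟩
  · exact ⟨[0, 2], by decide, by decide⟩
  · exact ⟨[2], by decide, by decide⟩

lemma hinj_c211 : ∀ c c' : Letter, c211 c = c211 c' → c = c' := by decide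

lemma PR_c211 {t3 Q : Word} {b : Letter}
    (h3 : applySub c211 t3 = (1 : Letter) :: (b :: Q)) :
    ∃ d t4, t3 = d :: t4 ∧
      ((d = 0 ∧ b = 1) ∨ (d = 1 ∧ b = 0) ∨ (d = 2 ∧ b = 2)) := by
  obtain ⟨d, t4, ht3, hd⟩ := RD h3
  refine ⟨d, t4, ht3, ?_⟩
  fin_cases d
  · have h6 : applySub c211 t4 = b :: Q := by simpa [c211] using hd
    obtain ⟨ee, t5, -, he⟩ := RD h6
    obtain ⟨ze, hze, -⟩ := hS_c211 ee
    rw [hze] at he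
    exact Or.inl ⟨rfl, by simpa using (List.cons_eq_cons.mp (by simpa using he)).1.symm⟩
  · exact Or.inr (Or.inl ⟨rfl, by simp [c211] at hd; exact hd.1.symm⟩)
  · exact Or.inr (Or.inr ⟨rfl, by simp [c211] at hd; exact hd.1.symm⟩)

lemma P_c211_1 (t v : Word) (a b : Letter)
    (h : ([a] ++ (applySub c211 v ++ [1]) ++ [b]) <:+: applySub c211 t) :
    ∃ c d, ([c] ++ v ++ [d]) <:+: t ∧
      ((c = 0 ∧ a = 1) ∨ (c = 1 ∧ a = 2) ∨ (c = 2 ∧ a = 2)) ∧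
      ((d = 0 ∧ b = 1) ∨ (d = 1 ∧ b = 0) ∨ (d = 2 ∧ b = 2)) := by
  obtain ⟨P, Q, hPQ⟩ := h
  have heq : applySub c211 t =
      (P ++ [a]) ++ (applySub c211 v ++ (1 : Letter) :: (b :: Q)) := by
    rw [← hPQ]; simp [List.append_assoc]
  obtain ⟨t1, t3, hteq, h1, h3⟩ := SM_core hS_c211 hinj_c211 heq
  obtain ⟨d, t4, ht3, hdb⟩ := PR_c211 h3
  obtain ⟨t1', c, z, ht1, hc, -⟩ := LD hS_c211.ne_nil h1
  refine ⟨c, d, ⟨t1', t4, by rw [hteq, ht1, ht3]; simp⟩, ?_, hdb⟩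
  have h5 := eq_last hc
  fin_cases c
  · exact Or.inl ⟨rfl, by simp [c211] at h5; simp [h5]⟩
  · exact Or.inr (Or.inl ⟨rfl, by simp [c211] at h5; simp [h5]⟩)
  · exact Or.inr (Or.inr ⟨rfl, by simp [c211] at h5; simp [h5]⟩)

lemma P_c211_2 (t v : Word) (a b : Letter)
    (h : ([a] ++ ([2] ++ applySub c211 v ++ [1]) ++ [b]) <:+: applySub c211 t) :
    ∃ c d, ([c] ++ v ++ [d]) <:+: t ∧
      ((c = 1 ∧ a = 0) ∨ (c = 2 ∧ a = 1)) ∧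
      ((d = 0 ∧ b = 1) ∨ (d = 1 ∧ b = 0) ∨ (d = 2 ∧ b = 2)) := by
  obtain ⟨P, Q, hPQ⟩ := h
  have heq : applySub c211 t =
      ((P ++ [a]) ++ [2]) ++ (applySub c211 v ++ (1 : Letter) :: (b :: Q)) := by
    rw [← hPQ]; simp [List.append_assoc]
  obtain ⟨t1, t3, hteq, h1, h3⟩ := SM_core hS_c211 hinj_c211 heq
  obtain ⟨d, t4, ht3, hdb⟩ := PR_c211 h3
  obtain ⟨t1', c, z, ht1, hc, hz⟩ := LD hS_c211.ne_nil h1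
  refine ⟨c, d, ⟨t1', t4, by rw [hteq, ht1, ht3]; simp⟩, ?_, hdb⟩
  fin_cases c
  · exfalso
    have hzz : z ++ [2] = [1] := by simpa [c211] using hc.symm
    rcases z with _ | ⟨x, z⟩
    · exact absurd hzz (by decide)
    · have := congrArg List.length hzz
      simp at this
  · have hzv : z = [1, 0] := by
      have : z ++ [2] = [1, 0] ++ [2] := by simpa [c211] using hc.symm
      exact (List.append_inj' this rfl).1
    rw [hzv] at hz
    have hz2 : (applySub c211 t1' ++ [1]) ++ [0] = P ++ [a] := by
      rw [← hz]; simp [List.append_assoc]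
    exact Or.inl ⟨rfl, by simpa using (List.append_inj' hz2 rfl).2.symm⟩
  · have hzv : z = [1] := by
      have : z ++ [2] = [1] ++ [2] := by simpa [c211] using hc.symm
      exact (List.append_inj' this rfl).1
    rw [hzv] at hz
    exact Or.inr ⟨rfl, by simpa using (List.append_inj' hz rfl).2.symm⟩

lemma L_c211_1 (t1 t2 v : Word) (c d e a b : Letter)
    (hRl : (c = 0 ∧ a = 1) ∨ (c = 1 ∧ a = 2) ∨ (c = 2 ∧ a = 2))
    (hRr : (d = 0 ∧ b = 1) ∨ (d = 1 ∧ b = 0) ∨ (d = 2 ∧ b = 2)) :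
    ([a] ++ (applySub c211 v ++ [1]) ++ [b]) <:+:
      applySub c211 (t1 ++ ([c] ++ (v ++ ([d, e] ++ t2)))) := by
  obtain ⟨P1, hP1⟩ : ∃ P1, applySub c211 t1 ++ c211 c = P1 ++ [a] := by
    rcases hRl with ⟨rfl, rfl⟩ | ⟨rfl, rfl⟩ | ⟨rfl, rfl⟩
    · exact ⟨applySub c211 t1, by simp [c211]⟩
    · exact ⟨applySub c211 t1 ++ [1, 0], by simp [c211, List.append_assoc]⟩
    · exact ⟨applySub c211 t1 ++ [1], by simp [c211, List.append_assoc]⟩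
  obtain ⟨r, hr⟩ : ∃ r, c211 d ++ c211 e = ([1] ++ [b]) ++ r := by
    rcases hRr with ⟨rfl, rfl⟩ | ⟨rfl, rfl⟩ | ⟨rfl, rfl⟩
    · obtain ⟨ze, hze, -⟩ := hS_c211 e
      exact ⟨ze, by rw [hze]; simp [c211]⟩
    · exact ⟨[2] ++ c211 e, by simp [c211]⟩
    · exact ⟨c211 e, by simp [c211]⟩
  refine ⟨P1, r ++ applySub c211 t2, ?_⟩
  rw [expand_applySub, assemble' (applySub c211 t1) (c211 c) (applySub c211 v) (c211 d)
      (c211 e) (applySub c211 t2) P1 [a] ([1] ++ [b]) r hP1 hr]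
  simp [List.append_assoc]

lemma L_c211_2 (t1 t2 v : Word) (c d e a b : Letter)
    (hRl : (c = 1 ∧ a = 0) ∨ (c = 2 ∧ a = 1))
    (hRr : (d = 0 ∧ b = 1) ∨ (d = 1 ∧ b = 0) ∨ (d = 2 ∧ b = 2)) :
    ([a] ++ ([2] ++ applySub c211 v ++ [1]) ++ [b]) <:+:
      applySub c211 (t1 ++ ([c] ++ (v ++ ([d, e] ++ t2)))) := by
  obtain ⟨P1, hP1⟩ : ∃ P1, applySub c211 t1 ++ c211 c = P1 ++ ([a] ++ [2]) := by
    rcases hRl with ⟨rfl, rfl⟩ | ⟨rfl, rfl⟩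
    · exact ⟨applySub c211 t1 ++ [1], by simp [c211, List.append_assoc]⟩
    · exact ⟨applySub c211 t1, by simp [c211]⟩
  obtain ⟨r, hr⟩ : ∃ r, c211 d ++ c211 e = ([1] ++ [b]) ++ r := by
    rcases hRr with ⟨rfl, rfl⟩ | ⟨rfl, rfl⟩ | ⟨rfl, rfl⟩
    · obtain ⟨ze, hze, -⟩ := hS_c211 e
      exact ⟨ze, by rw [hze]; simp [c211]⟩
    · exact ⟨[2] ++ c211 e, by simp [c211]⟩
    · exact ⟨c211 e, by simp [c211]⟩
  refine ⟨P1, r ++ applySub c211 t2, ?_⟩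
  rw [expand_applySub, assemble' (applySub c211 t1) (c211 c) (applySub c211 v) (c211 d)
      (c211 e) (applySub c211 t2) P1 ([a] ++ [2]) ([1] ++ [b]) r hP1 hr]
  simp [List.append_assoc]

end C211

section C121

lemma hS_c121 : StartMarked c121 0 := by
  intro c
  fin_cases c
  · exact ⟨[2], by decide, by decide⟩
  · exact ⟨[2, 1], by decide, by decide⟩
  · exact ⟨[1], by decide, by decide⟩

lemma hinj_c121 : ∀ c c' : Letter, c121 c = c121 c' → c = c' := by decide

lemma PL_c121_a {t1 P : Word} {a : Letter} (h1 : applySub c121 t1 = P ++ [a]) :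
    ∃ t1' c, t1 = t1' ++ [c] ∧
      ((c = 0 ∧ a = 2) ∨ (c = 1 ∧ a = 1) ∨ (c = 2 ∧ a = 1)) := by
  obtain ⟨t1', c, z, ht1, hc, -⟩ := LD hS_c121.ne_nil h1
  refine ⟨t1', c, ht1, ?_⟩
  have h5 := eq_last hc
  fin_cases c
  · exact Or.inl ⟨rfl, by simp [c121] at h5; simp [h5]⟩
  · exact Or.inr (Or.inl ⟨rfl, by simp [c121] at h5; simp [h5]⟩)
  · exact Or.inr (Or.inr ⟨rfl, by simp [c121] at h5; simp [h5]⟩)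

lemma PL_c121_b {t1 P0 : Word} {a : Letter}
    (h1 : applySub c121 t1 = (P0 ++ [a]) ++ [1]) :
    ∃ t1' c, t1 = t1' ++ [c] ∧ ((c = 1 ∧ a = 2) ∨ (c = 2 ∧ a = 0)) := by
  obtain ⟨t1', c, z, ht1, hc, hz⟩ := LD hS_c121.ne_nil h1
  refine ⟨t1', c, ht1, ?_⟩
  fin_cases c
  · exfalso
    have hzz : z ++ [1] = [0, 2] := by simpa [c121] using hc.symm
    have : ([0, 2] : Word).getLast? = some 1 := by rw [← hzz]; simp
    exact absurd this (by decide)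
  · have hzv : z = [0, 2] := by
      have : z ++ [1] = [0, 2] ++ [1] := by simpa [c121] using hc.symm
      exact (List.append_inj' this rfl).1
    rw [hzv] at hz
    have hz2 : (applySub c121 t1' ++ [0]) ++ [2] = P0 ++ [a] := by
      rw [← hz]; simp [List.append_assoc]
    exact Or.inl ⟨rfl, by simpa using (List.append_inj' hz2 rfl).2.symm⟩
  · have hzv : z = [0] := by
      have : z ++ [1] = [0] ++ [1] := by simpa [c121] using hc.symm
      exact (List.append_inj' this rfl).1
    rw [hzv] at hz
    exact Or.inr ⟨rfl, by simpa using (List.append_inj' hz rfl).2.symm⟩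

lemma PR_c121_a {t3 Q : Word} {b : Letter}
    (h3 : applySub c121 t3 = (0 : Letter) :: (b :: Q)) :
    ∃ d t4, t3 = d :: t4 ∧
      ((d = 0 ∧ b = 2) ∨ (d = 1 ∧ b = 2) ∨ (d = 2 ∧ b = 1)) := by
  obtain ⟨d, t4, ht3, hd⟩ := RD h3
  refine ⟨d, t4, ht3, ?_⟩
  fin_cases d
  · exact Or.inl ⟨rfl, by simp [c121] at hd; exact hd.1.symm⟩
  · exact Or.inr (Or.inl ⟨rfl, by simp [c121] at hd; exact hd.1.symm⟩)
  · exact Or.inr (Or.inr ⟨rfl, by simp [c121] at hd; exact hd.1.symm⟩)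

lemma PR_c121_b {t3 Q : Word} {b : Letter}
    (h3 : applySub c121 t3 = (0 : Letter) :: ((2 : Letter) :: (b :: Q))) :
    ∃ d t4, t3 = d :: t4 ∧ ((d = 0 ∧ b = 0) ∨ (d = 1 ∧ b = 1)) := by
  obtain ⟨d, t4, ht3, hd⟩ := RD h3
  refine ⟨d, t4, ht3, ?_⟩
  fin_cases d
  · have h6 : applySub c121 t4 = b :: Q := by simpa [c121] using hd
    obtain ⟨ee, t5, -, he⟩ := RD h6
    obtain ⟨ze, hze, -⟩ := hS_c121 ee
    rw [hze] at he
    exact Or.inl ⟨rfl, by simpa using (List.cons_eq_cons.mp (by simpa using he)).1.symm⟩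
  · exact Or.inr ⟨rfl, by simp [c121] at hd; exact hd.1.symm⟩
  · simp [c121] at hd

lemma P_c121_aa (t v : Word) (a b : Letter)
    (h : ([a] ++ (applySub c121 v ++ [0]) ++ [b]) <:+: applySub c121 t) :
    ∃ c d, ([c] ++ v ++ [d]) <:+: t ∧
      ((c = 0 ∧ a = 2) ∨ (c = 1 ∧ a = 1) ∨ (c = 2 ∧ a = 1)) ∧
      ((d = 0 ∧ b = 2) ∨ (d = 1 ∧ b = 2) ∨ (d = 2 ∧ b = 1)) := by
  obtain ⟨P, Q, hPQ⟩ := h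
  have heq : applySub c121 t =
      (P ++ [a]) ++ (applySub c121 v ++ (0 : Letter) :: (b :: Q)) := by
    rw [← hPQ]; simp [List.append_assoc]
  obtain ⟨t1, t3, hteq, h1, h3⟩ := SM_core hS_c121 hinj_c121 heq
  obtain ⟨d, t4, ht3, hdb⟩ := PR_c121_a h3
  obtain ⟨t1', c, ht1, hca⟩ := PL_c121_a h1
  exact ⟨c, d, ⟨t1', t4, by rw [hteq, ht1, ht3]; simp⟩, hca, hdb⟩

lemma P_c121_ab (t v : Word) (a b : Letter)
    (h : ([a] ++ (applySub c121 v ++ [0, 2]) ++ [b]) <:+: applySub c121 t) :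
    ∃ c d, ([c] ++ v ++ [d]) <:+: t ∧
      ((c = 0 ∧ a = 2) ∨ (c = 1 ∧ a = 1) ∨ (c = 2 ∧ a = 1)) ∧
      ((d = 0 ∧ b = 0) ∨ (d = 1 ∧ b = 1)) := by
  obtain ⟨P, Q, hPQ⟩ := h
  have heq : applySub c121 t =
      (P ++ [a]) ++ (applySub c121 v ++ (0 : Letter) :: ((2 : Letter) :: (b :: Q))) := by
    rw [← hPQ]; simp [List.append_assoc]
  obtain ⟨t1, t3, hteq, h1, h3⟩ := SM_core hS_c121 hinj_c121 heq
  obtain ⟨d, t4, ht3, hdb⟩ := PR_c121_b h3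
  obtain ⟨t1', c, ht1, hca⟩ := PL_c121_a h1
  exact ⟨c, d, ⟨t1', t4, by rw [hteq, ht1, ht3]; simp⟩, hca, hdb⟩

lemma P_c121_ba (t v : Word) (a b : Letter)
    (h : ([a] ++ ([1] ++ applySub c121 v ++ [0]) ++ [b]) <:+: applySub c121 t) :
    ∃ c d, ([c] ++ v ++ [d]) <:+: t ∧
      ((c = 1 ∧ a = 2) ∨ (c = 2 ∧ a = 0)) ∧
      ((d = 0 ∧ b = 2) ∨ (d = 1 ∧ b = 2) ∨ (d = 2 ∧ b = 1)) := by
  obtain ⟨P, Q, hPQ⟩ := h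
  have heq : applySub c121 t =
      ((P ++ [a]) ++ [1]) ++ (applySub c121 v ++ (0 : Letter) :: (b :: Q)) := by
    rw [← hPQ]; simp [List.append_assoc]
  obtain ⟨t1, t3, hteq, h1, h3⟩ := SM_core hS_c121 hinj_c121 heq
  obtain ⟨d, t4, ht3, hdb⟩ := PR_c121_a h3
  obtain ⟨t1', c, ht1, hca⟩ := PL_c121_b h1
  exact ⟨c, d, ⟨t1', t4, by rw [hteq, ht1, ht3]; simp⟩, hca, hdb⟩

lemma P_c121_bb (t v : Word) (a b : Letter)
    (h : ([a] ++ ([1] ++ applySub c121 v ++ [0, 2]) ++ [b]) <:+: applySub c121 t) :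
    ∃ c d, ([c] ++ v ++ [d]) <:+: t ∧
      ((c = 1 ∧ a = 2) ∨ (c = 2 ∧ a = 0)) ∧
      ((d = 0 ∧ b = 0) ∨ (d = 1 ∧ b = 1)) := by
  obtain ⟨P, Q, hPQ⟩ := h
  have heq : applySub c121 t =
      ((P ++ [a]) ++ [1]) ++ (applySub c121 v ++ (0 : Letter) :: ((2 : Letter) :: (b :: Q))) := by
    rw [← hPQ]; simp [List.append_assoc]
  obtain ⟨t1, t3, hteq, h1, h3⟩ := SM_core hS_c121 hinj_c121 heq
  obtain ⟨d, t4, ht3, hdb⟩ := PR_c121_b h3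
  obtain ⟨t1', c, ht1, hca⟩ := PL_c121_b h1
  exact ⟨c, d, ⟨t1', t4, by rw [hteq, ht1, ht3]; simp⟩, hca, hdb⟩

lemma L_c121_X1a {t1 : Word} {c a : Letter}
    (hRl : (c = 0 ∧ a = 2) ∨ (c = 1 ∧ a = 1) ∨ (c = 2 ∧ a = 1)) :
    ∃ P1, applySub c121 t1 ++ c121 c = P1 ++ [a] := by
  rcases hRl with ⟨rfl, rfl⟩ | ⟨rfl, rfl⟩ | ⟨rfl, rfl⟩
  · exact ⟨applySub c121 t1 ++ [0], by simp [c121, List.append_assoc]⟩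
  · exact ⟨applySub c121 t1 ++ [0, 2], by simp [c121, List.append_assoc]⟩
  · exact ⟨applySub c121 t1 ++ [0], by simp [c121, List.append_assoc]⟩

lemma L_c121_X1b {t1 : Word} {c a : Letter}
    (hRl : (c = 1 ∧ a = 2) ∨ (c = 2 ∧ a = 0)) :
    ∃ P1, applySub c121 t1 ++ c121 c = P1 ++ ([a] ++ [1]) := by
  rcases hRl with ⟨rfl, rfl⟩ | ⟨rfl, rfl⟩
  · exact ⟨applySub c121 t1 ++ [0], by simp [c121, List.append_assoc]⟩
  · exact ⟨applySub c121 t1, by simp [c121]⟩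

lemma L_c121_X2a {d e b : Letter}
    (hRr : (d = 0 ∧ b = 2) ∨ (d = 1 ∧ b = 2) ∨ (d = 2 ∧ b = 1)) :
    ∃ r, c121 d ++ c121 e = ([0] ++ [b]) ++ r := by
  rcases hRr with ⟨rfl, rfl⟩ | ⟨rfl, rfl⟩ | ⟨rfl, rfl⟩
  · exact ⟨c121 e, by simp [c121]⟩
  · exact ⟨[1] ++ c121 e, by simp [c121]⟩
  · exact ⟨c121 e, by simp [c121]⟩

lemma L_c121_X2b {d e b : Letter}
    (hRr : (d = 0 ∧ b = 0) ∨ (d = 1 ∧ b = 1)) :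
    ∃ r, c121 d ++ c121 e = ([0, 2] ++ [b]) ++ r := by
  rcases hRr with ⟨rfl, rfl⟩ | ⟨rfl, rfl⟩
  · obtain ⟨ze, hze, -⟩ := hS_c121 e
    exact ⟨ze, by rw [hze]; simp [c121]⟩
  · exact ⟨c121 e, by simp [c121]⟩

lemma L_c121_aa (t1 t2 v : Word) (c d e a b : Letter)
    (hRl : (c = 0 ∧ a = 2) ∨ (c = 1 ∧ a = 1) ∨ (c = 2 ∧ a = 1))
    (hRr : (d = 0 ∧ b = 2) ∨ (d = 1 ∧ b = 2) ∨ (d = 2 ∧ b = 1)) :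
    ([a] ++ (applySub c121 v ++ [0]) ++ [b]) <:+:
      applySub c121 (t1 ++ ([c] ++ (v ++ ([d, e] ++ t2)))) := by
  obtain ⟨P1, hP1⟩ := L_c121_X1a (t1 := t1) hRl
  obtain ⟨r, hr⟩ := L_c121_X2a (e := e) hRr
  refine ⟨P1, r ++ applySub c121 t2, ?_⟩
  rw [expand_applySub, assemble' (applySub c121 t1) (c121 c) (applySub c121 v) (c121 d)
      (c121 e) (applySub c121 t2) P1 [a] ([0] ++ [b]) r hP1 hr]
  simp [List.append_assoc]

lemma L_c121_ab (t1 t2 v : Word) (c d e a b : Letter)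
    (hRl : (c = 0 ∧ a = 2) ∨ (c = 1 ∧ a = 1) ∨ (c = 2 ∧ a = 1))
    (hRr : (d = 0 ∧ b = 0) ∨ (d = 1 ∧ b = 1)) :
    ([a] ++ (applySub c121 v ++ [0, 2]) ++ [b]) <:+:
      applySub c121 (t1 ++ ([c] ++ (v ++ ([d, e] ++ t2)))) := by
  obtain ⟨P1, hP1⟩ := L_c121_X1a (t1 := t1) hRl
  obtain ⟨r, hr⟩ := L_c121_X2b (e := e) hRr
  refine ⟨P1, r ++ applySub c121 t2, ?_⟩
  rw [expand_applySub, assemble' (applySub c121 t1) (c121 c) (applySub c121 v) (c121 d)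
      (c121 e) (applySub c121 t2) P1 [a] ([0, 2] ++ [b]) r hP1 hr]
  simp [List.append_assoc]

lemma L_c121_ba (t1 t2 v : Word) (c d e a b : Letter)
    (hRl : (c = 1 ∧ a = 2) ∨ (c = 2 ∧ a = 0))
    (hRr : (d = 0 ∧ b = 2) ∨ (d = 1 ∧ b = 2) ∨ (d = 2 ∧ b = 1)) :
    ([a] ++ ([1] ++ applySub c121 v ++ [0]) ++ [b]) <:+:
      applySub c121 (t1 ++ ([c] ++ (v ++ ([d, e] ++ t2)))) := by
  obtain ⟨P1, hP1⟩ := L_c121_X1b (t1 := t1) hRl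
  obtain ⟨r, hr⟩ := L_c121_X2a (e := e) hRr
  refine ⟨P1, r ++ applySub c121 t2, ?_⟩
  rw [expand_applySub, assemble' (applySub c121 t1) (c121 c) (applySub c121 v) (c121 d)
      (c121 e) (applySub c121 t2) P1 ([a] ++ [1]) ([0] ++ [b]) r hP1 hr]
  simp [List.append_assoc]

lemma L_c121_bb (t1 t2 v : Word) (c d e a b : Letter)
    (hRl : (c = 1 ∧ a = 2) ∨ (c = 2 ∧ a = 0))
    (hRr : (d = 0 ∧ b = 0) ∨ (d = 1 ∧ b = 1)) :
    ([a] ++ ([1] ++ applySub c121 v ++ [0, 2]) ++ [b]) <:+: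
      applySub c121 (t1 ++ ([c] ++ (v ++ ([d, e] ++ t2)))) := by
  obtain ⟨P1, hP1⟩ := L_c121_X1b (t1 := t1) hRl
  obtain ⟨r, hr⟩ := L_c121_X2b (e := e) hRr
  refine ⟨P1, r ++ applySub c121 t2, ?_⟩
  rw [expand_applySub, assemble' (applySub c121 t1) (c121 c) (applySub c121 v) (c121 d)
      (c121 e) (applySub c121 t2) P1 ([a] ++ [1]) ([0, 2] ++ [b]) r hP1 hr]
  simp [List.append_assoc]

end C121

section C212

lemma hE_c212 : EndMarked c212 2 := by
  intro c
  fin_cases c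
  · exact ⟨[1], by decide, by decide⟩
  · exact ⟨[1, 0], by decide, by decide⟩
  · exact ⟨[0], by decide, by decide⟩

lemma hinj_c212 : ∀ c c' : Letter, c212 c = c212 c' → c = c' := by decide

lemma PL_c212_a {t1 P0 : Word} {a : Letter}
    (h1 : applySub c212 t1 = (P0 ++ [a]) ++ [2]) :
    ∃ t1' c, t1 = t1' ++ [c] ∧
      ((c = 0 ∧ a = 1) ∨ (c = 1 ∧ a = 0) ∨ (c = 2 ∧ a = 0)) := by
  obtain ⟨t1', c, z, ht1, hc, hz⟩ := LD hE_c212.ne_nil h1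
  refine ⟨t1', c, ht1, ?_⟩
  fin_cases c
  · have hzv : z = [1] := by
      have : z ++ [2] = [1] ++ [2] := by simpa [c212] using hc.symm
      exact (List.append_inj' this rfl).1
    rw [hzv] at hz
    exact Or.inl ⟨rfl, by simpa using (List.append_inj' hz rfl).2.symm⟩
  · have hzv : z = [1, 0] := by
      have : z ++ [2] = [1, 0] ++ [2] := by simpa [c212] using hc.symm
      exact (List.append_inj' this rfl).1
    rw [hzv] at hz
    have hz2 : (applySub c212 t1' ++ [1]) ++ [0] = P0 ++ [a] := by
      rw [← hz]; simp [List.append_assoc]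
    exact Or.inr (Or.inl ⟨rfl, by simpa using (List.append_inj' hz2 rfl).2.symm⟩)
  · have hzv : z = [0] := by
      have : z ++ [2] = [0] ++ [2] := by simpa [c212] using hc.symm
      exact (List.append_inj' this rfl).1
    rw [hzv] at hz
    exact Or.inr (Or.inr ⟨rfl, by simpa using (List.append_inj' hz rfl).2.symm⟩)

lemma PL_c212_b {t1 P0 : Word} {a : Letter}
    (h1 : applySub c212 t1 = ((P0 ++ [a]) ++ [0]) ++ [2]) :
    ∃ t1' c, t1 = t1' ++ [c] ∧ ((c = 1 ∧ a = 1) ∨ (c = 2 ∧ a = 2)) := by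
  obtain ⟨t1', c, z, ht1, hc, hz⟩ := LD hE_c212.ne_nil h1
  refine ⟨t1', c, ht1, ?_⟩
  fin_cases c
  · exfalso
    have hzv : z = [1] := by
      have : z ++ [2] = [1] ++ [2] := by simpa [c212] using hc.symm
      exact (List.append_inj' this rfl).1
    rw [hzv] at hz
    have := (List.append_inj' hz rfl).2
    exact absurd (by simpa using this : (1 : Letter) = 0) (by decide)
  · have hzv : z = [1, 0] := by
      have : z ++ [2] = [1, 0] ++ [2] := by simpa [c212] using hc.symm
      exact (List.append_inj' this rfl).1
    rw [hzv] at hz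
    have hz2 : (applySub c212 t1' ++ [1]) ++ [0] = (P0 ++ [a]) ++ [0] := by
      rw [← hz]; simp [List.append_assoc]
    have hz3 : applySub c212 t1' ++ [1] = P0 ++ [a] := (List.append_inj' hz2 rfl).1
    exact Or.inl ⟨rfl, by simpa using (List.append_inj' hz3 rfl).2.symm⟩
  · have hzv : z = [0] := by
      have : z ++ [2] = [0] ++ [2] := by simpa [c212] using hc.symm
      exact (List.append_inj' this rfl).1
    rw [hzv] at hz
    have hz3 : applySub c212 t1' = P0 ++ [a] := (List.append_inj' hz rfl).1
    exact Or.inr ⟨rfl, by simpa using EM_last_letter hE_c212 hz3⟩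

lemma PR_c212_a {t3 Q : Word} {b : Letter}
    (h3 : applySub c212 t3 = b :: Q) :
    ∃ d t4, t3 = d :: t4 ∧
      ((d = 0 ∧ b = 1) ∨ (d = 1 ∧ b = 1) ∨ (d = 2 ∧ b = 0)) := by
  obtain ⟨d, t4, ht3, hd⟩ := RD h3
  refine ⟨d, t4, ht3, ?_⟩
  fin_cases d
  · exact Or.inl ⟨rfl, by simp [c212] at hd; exact hd.1.symm⟩
  · exact Or.inr (Or.inl ⟨rfl, by simp [c212] at hd; exact hd.1.symm⟩)
  · exact Or.inr (Or.inr ⟨rfl, by simp [c212] at hd; exact hd.1.symm⟩)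

lemma PR_c212_b {t3 Q : Word} {b : Letter}
    (h3 : applySub c212 t3 = (1 : Letter) :: (b :: Q)) :
    ∃ d t4, t3 = d :: t4 ∧ ((d = 0 ∧ b = 2) ∨ (d = 1 ∧ b = 0)) := by
  obtain ⟨d, t4, ht3, hd⟩ := RD h3
  refine ⟨d, t4, ht3, ?_⟩
  fin_cases d
  · exact Or.inl ⟨rfl, by simp [c212] at hd; exact hd.1.symm⟩
  · exact Or.inr ⟨rfl, by simp [c212] at hd; exact hd.1.symm⟩
  · simp [c212] at hd

lemma P_c212_aa (t v : Word) (a b : Letter)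
    (h : ([a] ++ ([2] ++ applySub c212 v) ++ [b]) <:+: applySub c212 t) :
    ∃ c d, ([c] ++ v ++ [d]) <:+: t ∧
      ((c = 0 ∧ a = 1) ∨ (c = 1 ∧ a = 0) ∨ (c = 2 ∧ a = 0)) ∧
      ((d = 0 ∧ b = 1) ∨ (d = 1 ∧ b = 1) ∨ (d = 2 ∧ b = 0)) := by
  obtain ⟨P, Q, hPQ⟩ := h
  have heq : applySub c212 t =
      (P ++ [a]) ++ (2 : Letter) :: (applySub c212 v ++ (b :: Q)) := by
    rw [← hPQ]; simp [List.append_assoc]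
  obtain ⟨t1, t3, hteq, h1, h3⟩ := EM_core hE_c212 hinj_c212 heq
  obtain ⟨d, t4, ht3, hdb⟩ := PR_c212_a h3
  obtain ⟨t1', c, ht1, hca⟩ := PL_c212_a h1
  exact ⟨c, d, ⟨t1', t4, by rw [hteq, ht1, ht3]; simp⟩, hca, hdb⟩

lemma P_c212_ab (t v : Word) (a b : Letter)
    (h : ([a] ++ ([2] ++ applySub c212 v ++ [1]) ++ [b]) <:+: applySub c212 t) :
    ∃ c d, ([c] ++ v ++ [d]) <:+: t ∧
      ((c = 0 ∧ a = 1) ∨ (c = 1 ∧ a = 0) ∨ (c = 2 ∧ a = 0)) ∧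
      ((d = 0 ∧ b = 2) ∨ (d = 1 ∧ b = 0)) := by
  obtain ⟨P, Q, hPQ⟩ := h
  have heq : applySub c212 t =
      (P ++ [a]) ++ (2 : Letter) :: (applySub c212 v ++ ((1 : Letter) :: b :: Q)) := by
    rw [← hPQ]; simp [List.append_assoc]
  obtain ⟨t1, t3, hteq, h1, h3⟩ := EM_core hE_c212 hinj_c212 heq
  obtain ⟨d, t4, ht3, hdb⟩ := PR_c212_b h3
  obtain ⟨t1', c, ht1, hca⟩ := PL_c212_a h1
  exact ⟨c, d, ⟨t1', t4, by rw [hteq, ht1, ht3]; simp⟩, hca, hdb⟩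

lemma P_c212_ba (t v : Word) (a b : Letter)
    (h : ([a] ++ ([0, 2] ++ applySub c212 v) ++ [b]) <:+: applySub c212 t) :
    ∃ c d, ([c] ++ v ++ [d]) <:+: t ∧
      ((c = 1 ∧ a = 1) ∨ (c = 2 ∧ a = 2)) ∧
      ((d = 0 ∧ b = 1) ∨ (d = 1 ∧ b = 1) ∨ (d = 2 ∧ b = 0)) := by
  obtain ⟨P, Q, hPQ⟩ := h
  have heq : applySub c212 t =
      ((P ++ [a]) ++ [0]) ++ (2 : Letter) :: (applySub c212 v ++ (b :: Q)) := by
    rw [← hPQ]; simp [List.append_assoc]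
  obtain ⟨t1, t3, hteq, h1, h3⟩ := EM_core hE_c212 hinj_c212 heq
  obtain ⟨d, t4, ht3, hdb⟩ := PR_c212_a h3
  obtain ⟨t1', c, ht1, hca⟩ := PL_c212_b h1
  exact ⟨c, d, ⟨t1', t4, by rw [hteq, ht1, ht3]; simp⟩, hca, hdb⟩

lemma P_c212_bb (t v : Word) (a b : Letter)
    (h : ([a] ++ ([0, 2] ++ applySub c212 v ++ [1]) ++ [b]) <:+: applySub c212 t) :
    ∃ c d, ([c] ++ v ++ [d]) <:+: t ∧
      ((c = 1 ∧ a = 1) ∨ (c = 2 ∧ a = 2)) ∧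
      ((d = 0 ∧ b = 2) ∨ (d = 1 ∧ b = 0)) := by
  obtain ⟨P, Q, hPQ⟩ := h
  have heq : applySub c212 t =
      ((P ++ [a]) ++ [0]) ++ (2 : Letter) :: (applySub c212 v ++ ((1 : Letter) :: b :: Q)) := by
    rw [← hPQ]; simp [List.append_assoc]
  obtain ⟨t1, t3, hteq, h1, h3⟩ := EM_core hE_c212 hinj_c212 heq
  obtain ⟨d, t4, ht3, hdb⟩ := PR_c212_b h3
  obtain ⟨t1', c, ht1, hca⟩ := PL_c212_b h1
  exact ⟨c, d, ⟨t1', t4, by rw [hteq, ht1, ht3]; simp⟩, hca, hdb⟩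

lemma L_c212_X1a {t1 : Word} {c a : Letter}
    (hRl : (c = 0 ∧ a = 1) ∨ (c = 1 ∧ a = 0) ∨ (c = 2 ∧ a = 0)) :
    ∃ P1, applySub c212 t1 ++ c212 c = P1 ++ ([a] ++ [2]) := by
  rcases hRl with ⟨rfl, rfl⟩ | ⟨rfl, rfl⟩ | ⟨rfl, rfl⟩
  · exact ⟨applySub c212 t1, by simp [c212]⟩
  · exact ⟨applySub c212 t1 ++ [1], by simp [c212, List.append_assoc]⟩
  · exact ⟨applySub c212 t1, by simp [c212]⟩

lemma L_c212_X1b {t1 : Word} {c a : Letter}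
    (hRl : (c = 1 ∧ a = 1) ∨ (c = 2 ∧ a = 2))
    (hc2 : c = 2 → t1 ≠ []) :
    ∃ P1, applySub c212 t1 ++ c212 c = P1 ++ ([a] ++ [0, 2]) := by
  rcases hRl with ⟨rfl, rfl⟩ | ⟨rfl, rfl⟩
  · exact ⟨applySub c212 t1, by simp [c212]⟩
  · obtain ⟨z, hz⟩ := EM_last hE_c212 (hc2 rfl)
    exact ⟨z, by rw [hz]; simp [c212, List.append_assoc]⟩

lemma L_c212_X2a {d e b : Letter}
    (hRr : (d = 0 ∧ b = 1) ∨ (d = 1 ∧ b = 1) ∨ (d = 2 ∧ b = 0)) :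
    ∃ r, c212 d ++ c212 e = [b] ++ r := by
  rcases hRr with ⟨rfl, rfl⟩ | ⟨rfl, rfl⟩ | ⟨rfl, rfl⟩
  · exact ⟨[2] ++ c212 e, by simp [c212]⟩
  · exact ⟨[0, 2] ++ c212 e, by simp [c212]⟩
  · exact ⟨[2] ++ c212 e, by simp [c212]⟩

lemma L_c212_X2b {d e b : Letter}
    (hRr : (d = 0 ∧ b = 2) ∨ (d = 1 ∧ b = 0)) :
    ∃ r, c212 d ++ c212 e = ([1] ++ [b]) ++ r := by
  rcases hRr with ⟨rfl, rfl⟩ | ⟨rfl, rfl⟩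
  · exact ⟨c212 e, by simp [c212]⟩
  · exact ⟨[2] ++ c212 e, by simp [c212]⟩

lemma L_c212_aa (t1 t2 v : Word) (c d e a b : Letter)
    (hRl : (c = 0 ∧ a = 1) ∨ (c = 1 ∧ a = 0) ∨ (c = 2 ∧ a = 0))
    (hRr : (d = 0 ∧ b = 1) ∨ (d = 1 ∧ b = 1) ∨ (d = 2 ∧ b = 0)) :
    ([a] ++ ([2] ++ applySub c212 v) ++ [b]) <:+:
      applySub c212 (t1 ++ ([c] ++ (v ++ ([d, e] ++ t2)))) := by
  obtain ⟨P1, hP1⟩ := L_c212_X1a (t1 := t1) hRl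
  obtain ⟨r, hr⟩ := L_c212_X2a (e := e) hRr
  refine ⟨P1, r ++ applySub c212 t2, ?_⟩
  rw [expand_applySub, assemble' (applySub c212 t1) (c212 c) (applySub c212 v) (c212 d)
      (c212 e) (applySub c212 t2) P1 ([a] ++ [2]) [b] r hP1 hr]
  simp [List.append_assoc]

lemma L_c212_ab (t1 t2 v : Word) (c d e a b : Letter)
    (hRl : (c = 0 ∧ a = 1) ∨ (c = 1 ∧ a = 0) ∨ (c = 2 ∧ a = 0))
    (hRr : (d = 0 ∧ b = 2) ∨ (d = 1 ∧ b = 0)) :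
    ([a] ++ ([2] ++ applySub c212 v ++ [1]) ++ [b]) <:+:
      applySub c212 (t1 ++ ([c] ++ (v ++ ([d, e] ++ t2)))) := by
  obtain ⟨P1, hP1⟩ := L_c212_X1a (t1 := t1) hRl
  obtain ⟨r, hr⟩ := L_c212_X2b (e := e) hRr
  refine ⟨P1, r ++ applySub c212 t2, ?_⟩
  rw [expand_applySub, assemble' (applySub c212 t1) (c212 c) (applySub c212 v) (c212 d)
      (c212 e) (applySub c212 t2) P1 ([a] ++ [2]) ([1] ++ [b]) r hP1 hr]
  simp [List.append_assoc]

lemma L_c212_ba (t1 t2 v : Word) (c d e a b : Letter)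
    (hRl : (c = 1 ∧ a = 1) ∨ (c = 2 ∧ a = 2))
    (hRr : (d = 0 ∧ b = 1) ∨ (d = 1 ∧ b = 1) ∨ (d = 2 ∧ b = 0))
    (hc2 : c = 2 → t1 ≠ []) :
    ([a] ++ ([0, 2] ++ applySub c212 v) ++ [b]) <:+:
      applySub c212 (t1 ++ ([c] ++ (v ++ ([d, e] ++ t2)))) := by
  obtain ⟨P1, hP1⟩ := L_c212_X1b (t1 := t1) hRl hc2
  obtain ⟨r, hr⟩ := L_c212_X2a (e := e) hRr
  refine ⟨P1, r ++ applySub c212 t2, ?_⟩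
  rw [expand_applySub, assemble' (applySub c212 t1) (c212 c) (applySub c212 v) (c212 d)
      (c212 e) (applySub c212 t2) P1 ([a] ++ [0, 2]) [b] r hP1 hr]
  simp [List.append_assoc]

lemma L_c212_bb (t1 t2 v : Word) (c d e a b : Letter)
    (hRl : (c = 1 ∧ a = 1) ∨ (c = 2 ∧ a = 2))
    (hRr : (d = 0 ∧ b = 2) ∨ (d = 1 ∧ b = 0))
    (hc2 : c = 2 → t1 ≠ []) :
    ([a] ++ ([0, 2] ++ applySub c212 v ++ [1]) ++ [b]) <:+:
      applySub c212 (t1 ++ ([c] ++ (v ++ ([d, e] ++ t2)))) := by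
  obtain ⟨P1, hP1⟩ := L_c212_X1b (t1 := t1) hRl hc2
  obtain ⟨r, hr⟩ := L_c212_X2b (e := e) hRr
  refine ⟨P1, r ++ applySub c212 t2, ?_⟩
  rw [expand_applySub, assemble' (applySub c212 t1) (c212 c) (applySub c212 v) (c212 d)
      (c212 e) (applySub c212 t2) P1 ([a] ++ [0, 2]) ([1] ++ [b]) r hP1 hr]
  simp [List.append_assoc]

end C212

end Aux

theorem stmt15 (w w1 : ℕ → Letter) (τ : ℕ → Letter → Word) (a : ℕ → Letter)
    (hτ : ∀ n, τ n ∈ Cprime)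
    (hpref : ∀ n, IsPrefixOfInf (comps τ 0 n [a n]) w)
    (hlen : Filter.Tendsto (fun n => (comps τ 0 n [a n]).length)
      Filter.atTop Filter.atTop)
    (hpref1 : ∀ n, IsPrefixOfInf (comps (fun k => τ (k + 1)) 0 n [a (n + 1)]) w1)
    (hlen1 : Filter.Tendsto (fun n => (comps (fun k => τ (k + 1)) 0 n [a (n + 1)]).length)
      Filter.atTop Filter.atTop)
    (hshift : ∀ n : ℕ,
      IsPrefixOfInf (applySub (τ 0) (List.ofFn (fun i : Fin n => w1 i))) w)
    (u : Word) (hune : u ≠ []) (hufac : FactorOf u w) (hubis : Bispecial u w)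
    (v : Word) (hvfac : FactorOf v w1) (hvbis : Bispecial v w1)
    (hdec : SyncDecomp (τ 0) u v)
    (hord : Ordinary v w1) :
    Ordinary u w := by
  have hofn : ∀ n : ℕ, Aux.chunk w1 0 n = List.ofFn (fun i : Fin n => w1 i) := by
    intro n; simp [Aux.chunk]
  have hw1zero : w1 0 ≠ 2 := by
    intro h2
    obtain ⟨n, hn⟩ := (hlen1.eventually (Filter.eventually_ge_atTop 2)).exists
    have hnn := Aux.comps_ne_nil (fun k => τ (k + 1)) (fun n => hτ (n + 1)) n 0 (a (n + 1))
    have hhead : (comps (fun k => τ (k + 1)) 0 n [a (n + 1)]).head? = some 2 := by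
      rcases hx : comps (fun k => τ (k + 1)) 0 n [a (n + 1)] with _ | ⟨y, Y⟩
      · exact absurd hx hnn
      · have hlt : 0 < (comps (fun k => τ (k + 1)) 0 n [a (n + 1)]).length := by
          rw [hx]; simp
        have h0 := hpref1 n 0 hlt
        have h1 := List.getElem_of_eq hx hlt
        rw [h1] at h0
        simp at h0
        simp [h0, h2]
    have h1 := Aux.comps_head2 (fun k => τ (k + 1)) (fun n => hτ (n + 1)) n 0 (a (n + 1)) hhead
    rw [h1] at hn
    simp at hn
  rcases show τ 0 = c11 ∨ τ 0 = c22 ∨ τ 0 = c122 ∨ τ 0 = c211 ∨ τ 0 = c121 ∨ τ 0 = c212 by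
      simpa [Cprime, Set.mem_insert_iff] using hτ 0 with hσ | hσ | hσ | hσ | hσ | hσ
  · -- c11
    have hu := hdec.1 hσ
    rw [hσ] at hu hshift
    subst hu
    refine Aux.main_variant (fun c a => a = c) (fun d b => b = d)
      (fun n => by rw [hofn]; exact hshift n) (by decide)
      (fun t A B h => Aux.P_c11 t v A B h)
      (fun t1 t2 c d e A B h1 h2 _ => Aux.L_c11 t1 t2 v c d e A B h1 h2)
      (fun c A A' h h' => h.trans h'.symm)
      (fun d B B' h h' => h.trans h'.symm)
      hw1zero hubis hord
  · -- c22
    have hu := hdec.2.1 hσ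
    rw [hσ] at hu hshift
    subst hu
    exact Aux.main_variant (fun c a => a = c) (fun d b => b = d)
      (fun n => by rw [hofn]; exact hshift n) (by decide)
      (fun t A B h => Aux.P_c22 t v A B h)
      (fun t1 t2 c d e A B h1 h2 h3 => Aux.L_c22 t1 t2 v c d e A B h1 h2 h3)
      (fun c A A' h h' => h.trans h'.symm)
      (fun d B B' h h' => h.trans h'.symm)
      hw1zero hubis hord
  · -- c122
    have hu := hdec.2.2.1 hσ
    rw [hσ] at hu hshift
    rcases hu with hu | hu <;> subst hu
    · exact Aux.main_variant
        (fun c a => (c = 0 ∧ a = 0) ∨ (c = 1 ∧ a = 2) ∨ (c = 2 ∧ a = 1))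
        (fun d b => (d = 0 ∧ b = 0) ∨ (d = 1 ∧ b = 0) ∨ (d = 2 ∧ b = 1))
        (fun n => by rw [hofn]; exact hshift n) (by decide)
        (fun t A B h => Aux.P_c122_1 t v A B h)
        (fun t1 t2 c d e A B h1 h2 h3 => Aux.L_c122_1 t1 t2 v c d e A B h1 h2 h3)
        (by decide) (by decide) hw1zero hubis hord
    · exact Aux.main_variant
        (fun c a => (c = 0 ∧ a = 0) ∨ (c = 1 ∧ a = 2) ∨ (c = 2 ∧ a = 1))
        (fun d b => (d = 0 ∧ b = 1) ∨ (d = 1 ∧ b = 2))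
        (fun n => by rw [hofn]; exact hshift n) (by decide)
        (fun t A B h => Aux.P_c122_2 t v A B h)
        (fun t1 t2 c d e A B h1 h2 h3 => Aux.L_c122_2 t1 t2 v c d e A B h1 h2 h3)
        (by decide) (by decide) hw1zero hubis hord
  · -- c211
    have hu := hdec.2.2.2.1 hσ
    rw [hσ] at hu hshift
    rcases hu with hu | hu <;> subst hu
    · exact Aux.main_variant
        (fun c a => (c = 0 ∧ a = 1) ∨ (c = 1 ∧ a = 2) ∨ (c = 2 ∧ a = 2))
        (fun d b => (d = 0 ∧ b = 1) ∨ (d = 1 ∧ b = 0) ∨ (d = 2 ∧ b = 2))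
        (fun n => by rw [hofn]; exact hshift n) (by decide)
        (fun t A B h => Aux.P_c211_1 t v A B h)
        (fun t1 t2 c d e A B h1 h2 _ => Aux.L_c211_1 t1 t2 v c d e A B h1 h2)
        (by decide) (by decide) hw1zero hubis hord
    · exact Aux.main_variant
        (fun c a => (c = 1 ∧ a = 0) ∨ (c = 2 ∧ a = 1))
        (fun d b => (d = 0 ∧ b = 1) ∨ (d = 1 ∧ b = 0) ∨ (d = 2 ∧ b = 2))
        (fun n => by rw [hofn]; exact hshift n) (by decide)
        (fun t A B h => Aux.P_c211_2 t v A B h)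
        (fun t1 t2 c d e A B h1 h2 _ => Aux.L_c211_2 t1 t2 v c d e A B h1 h2)
        (by decide) (by decide) hw1zero hubis hord
  · -- c121
    obtain ⟨p, hp, sfx, hs, hu⟩ := hdec.2.2.2.2.1 hσ
    rw [hσ] at hu hshift
    simp only [List.mem_cons, List.mem_singleton, List.not_mem_nil, or_false] at hp hs
    rcases hp with rfl | rfl <;> rcases hs with rfl | rfl <;>
      (try simp only [List.nil_append, List.append_nil] at hu) <;> subst hu
    · exact Aux.main_variant
        (fun c a => (c = 0 ∧ a = 2) ∨ (c = 1 ∧ a = 1) ∨ (c = 2 ∧ a = 1))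
        (fun d b => (d = 0 ∧ b = 2) ∨ (d = 1 ∧ b = 2) ∨ (d = 2 ∧ b = 1))
        (fun n => by rw [hofn]; exact hshift n) (by decide)
        (fun t A B h => Aux.P_c121_aa t v A B h)
        (fun t1 t2 c d e A B h1 h2 _ => Aux.L_c121_aa t1 t2 v c d e A B h1 h2)
        (by decide) (by decide) hw1zero hubis hord
    · exact Aux.main_variant
        (fun c a => (c = 0 ∧ a = 2) ∨ (c = 1 ∧ a = 1) ∨ (c = 2 ∧ a = 1))
        (fun d b => (d = 0 ∧ b = 0) ∨ (d = 1 ∧ b = 1))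
        (fun n => by rw [hofn]; exact hshift n) (by decide)
        (fun t A B h => Aux.P_c121_ab t v A B h)
        (fun t1 t2 c d e A B h1 h2 _ => Aux.L_c121_ab t1 t2 v c d e A B h1 h2)
        (by decide) (by decide) hw1zero hubis hord
    · exact Aux.main_variant
        (fun c a => (c = 1 ∧ a = 2) ∨ (c = 2 ∧ a = 0))
        (fun d b => (d = 0 ∧ b = 2) ∨ (d = 1 ∧ b = 2) ∨ (d = 2 ∧ b = 1))
        (fun n => by rw [hofn]; exact hshift n) (by decide)
        (fun t A B h => Aux.P_c121_ba t v A B h)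
        (fun t1 t2 c d e A B h1 h2 _ => Aux.L_c121_ba t1 t2 v c d e A B h1 h2)
        (by decide) (by decide) hw1zero hubis hord
    · exact Aux.main_variant
        (fun c a => (c = 1 ∧ a = 2) ∨ (c = 2 ∧ a = 0))
        (fun d b => (d = 0 ∧ b = 0) ∨ (d = 1 ∧ b = 1))
        (fun n => by rw [hofn]; exact hshift n) (by decide)
        (fun t A B h => Aux.P_c121_bb t v A B h)
        (fun t1 t2 c d e A B h1 h2 _ => Aux.L_c121_bb t1 t2 v c d e A B h1 h2)
        (by decide) (by decide) hw1zero hubis hord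
  · -- c212
    obtain ⟨p, hp, sfx, hs, hu⟩ := hdec.2.2.2.2.2 hσ
    rw [hσ] at hu hshift
    simp only [List.mem_cons, List.mem_singleton, List.not_mem_nil, or_false] at hp hs
    rcases hp with rfl | rfl <;> rcases hs with rfl | rfl <;>
      (try simp only [List.nil_append, List.append_nil] at hu) <;> subst hu
    · exact Aux.main_variant
        (fun c a => (c = 0 ∧ a = 1) ∨ (c = 1 ∧ a = 0) ∨ (c = 2 ∧ a = 0))
        (fun d b => (d = 0 ∧ b = 1) ∨ (d = 1 ∧ b = 1) ∨ (d = 2 ∧ b = 0))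
        (fun n => by rw [hofn]; exact hshift n) (by decide)
        (fun t A B h => Aux.P_c212_aa t v A B h)
        (fun t1 t2 c d e A B h1 h2 _ => Aux.L_c212_aa t1 t2 v c d e A B h1 h2)
        (by decide) (by decide) hw1zero hubis hord
    · exact Aux.main_variant
        (fun c a => (c = 0 ∧ a = 1) ∨ (c = 1 ∧ a = 0) ∨ (c = 2 ∧ a = 0))
        (fun d b => (d = 0 ∧ b = 2) ∨ (d = 1 ∧ b = 0))
        (fun n => by rw [hofn]; exact hshift n) (by decide)
        (fun t A B h => Aux.P_c212_ab t v A B h)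
        (fun t1 t2 c d e A B h1 h2 _ => Aux.L_c212_ab t1 t2 v c d e A B h1 h2)
        (by decide) (by decide) hw1zero hubis hord
    · exact Aux.main_variant
        (fun c a => (c = 1 ∧ a = 1) ∨ (c = 2 ∧ a = 2))
        (fun d b => (d = 0 ∧ b = 1) ∨ (d = 1 ∧ b = 1) ∨ (d = 2 ∧ b = 0))
        (fun n => by rw [hofn]; exact hshift n) (by decide)
        (fun t A B h => Aux.P_c212_ba t v A B h)
        (fun t1 t2 c d e A B h1 h2 h3 => Aux.L_c212_ba t1 t2 v c d e A B h1 h2 h3)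
        (by decide) (by decide) hw1zero hubis hord
    · exact Aux.main_variant
        (fun c a => (c = 1 ∧ a = 1) ∨ (c = 2 ∧ a = 2))
        (fun d b => (d = 0 ∧ b = 2) ∨ (d = 1 ∧ b = 0))
        (fun n => by rw [hofn]; exact hshift n) (by decide)
        (fun t A B h => Aux.P_c212_bb t v A B h)
        (fun t1 t2 c d e A B h1 h2 h3 => Aux.L_c212_bb t1 t2 v c d e A B h1 h2 h3)
        (by decide) (by decide) hw1zero hubis hord
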